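/- arXiv:1812.11205 — 9 statements merged into one kernel-verified Lean document; each statement's English description precedes it below -/
import Mathlib

section
/- Let (c_n) and (β_n) be sequences with c_n > 0 and 0 < β_n < 1 for all n ≥ 1, and let (a_n) be a sequence of nonzero complex numbers satisfying for all n ≥ 1: |a_{2n}| ≥ (c_n+1)/(1−β_n) and |a_{2n+1}| ≤ min{c_n, c_{n+1}, β_n β_{n+1}(c_{n+1}+1)/(4(1−β_{n+1})), β_n β_{n+1}(c_n+1)/(4(1−β_n))}. Then the continued fraction K_{n=1}^∞ a_n/1 converges to a finite value, i.e., the sequence of approximants A_N/B_N converges in ℂ. -/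
open Filter Topology Finset

/-!
The even part (approximants `f_{2n}`) and the odd part (`f_{2n+1}`) of the continued fraction
satisfy three-term recurrences `q (n+2) = b n * q (n+1) - d n * q n`. Rescaling `q n` by
`∏ k < n, ρ k` with `ρ n = 2 / (β (n+1) * ‖a (2n+2)‖)`, the hypotheses become
`‖b n‖ * ρ (n+1) ≥ 2` and `t n = ‖d n‖ * ρ n * ρ (n+1) ≤ 1`, so the rescaled sizes satisfy
`X (n+2) ≥ 2 X (n+1) - t n * X n` and hence grow at least like `U n = 1 + ∑ k < n, T k` with
`T k = ∏ j < k, t j`. The rescaled determinants of the even part are a constant times `T n`, so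
consecutive even approximants differ by at most a constant times `1 / U n - 1 / U (n+1)`, and they
form a Cauchy sequence. The gap between `f_{2n+1}` and `f_{2n}` is at most a constant times
`T' n / U' n` for the odd part, which tends to `0` because `T'` is decreasing.
-/

section RealSequences

theorem prod_le_sub_of_two_mul_sub_le {X t : ℕ → ℝ} (h0 : X 0 = 1) (h1 : 2 ≤ X 1)
    (ht0 : ∀ n, 0 ≤ t n) (ht1 : ∀ n, t n ≤ 1)
    (hX : ∀ n, 2 * X (n + 1) - t n * X n ≤ X (n + 2)) (n : ℕ) :
    ∏ k ∈ range n, t k ≤ X (n + 1) - X n ∧ 1 ≤ X n := by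
  induction n with
  | zero => simp only [prod_range_zero, h0]; constructor <;> linarith
  | succ n ih =>
    obtain ⟨hdiff, hone⟩ := ih
    have hT : 0 ≤ ∏ k ∈ range n, t k := prod_nonneg fun k _ => ht0 k
    -- `X (n+2) - X (n+1) ≥ t n * (X (n+1) - X n) + (1 - t n) * X (n+1)`
    have hstep : t n * (X (n + 1) - X n) ≤ X (n + 2) - X (n + 1) := by
      nlinarith [hX n, ht1 n, mul_nonneg (sub_nonneg.2 (ht1 n)) (by linarith : 0 ≤ X (n + 1))]
    refine ⟨?_, by linarith⟩
    rw [prod_range_succ, mul_comm]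
    exact (mul_le_mul_of_nonneg_left hdiff (ht0 n)).trans hstep

theorem one_add_sum_prod_le_of_two_mul_sub_le {X t : ℕ → ℝ} (h0 : X 0 = 1) (h1 : 2 ≤ X 1)
    (ht0 : ∀ n, 0 ≤ t n) (ht1 : ∀ n, t n ≤ 1)
    (hX : ∀ n, 2 * X (n + 1) - t n * X n ≤ X (n + 2)) (n : ℕ) :
    1 + ∑ k ∈ range n, ∏ j ∈ range k, t j ≤ X n := by
  have hsum : ∑ k ∈ range n, (X (k + 1) - X k) = X n - X 0 := sum_range_sub X n
  have := sum_le_sum fun k (_ : k ∈ range n) =>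
    (prod_le_sub_of_two_mul_sub_le h0 h1 ht0 ht1 hX k).1
  linarith

theorem summable_sub_succ_of_antitone {v : ℕ → ℝ} (hv : Antitone v) (hv0 : ∀ n, 0 ≤ v n) :
    Summable fun n => v n - v (n + 1) := by
  refine summable_of_sum_range_le (c := v 0) (fun n => sub_nonneg.2 (hv n.le_succ)) fun n => ?_
  rw [sum_range_sub']
  linarith [hv0 n]

theorem tendsto_div_one_add_sum_of_antitone {T : ℕ → ℝ} (hT : Antitone T) (hT0 : ∀ n, 0 ≤ T n) :
    Tendsto (fun n => T n / (1 + ∑ k ∈ range n, T k)) atTop (𝓝 0) := by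
  have hpos : ∀ n, 0 < 1 + ∑ k ∈ range n, T k := fun n => by
    linarith [sum_nonneg fun k (_ : k ∈ range n) => hT0 k]
  -- the first `n` terms are all at least `T n`
  have hbound : ∀ n, 1 ≤ n → T n / (1 + ∑ k ∈ range n, T k) ≤ 1 / n := fun n hn => by
    have : n * T n ≤ ∑ k ∈ range n, T k := by
      simpa using card_nsmul_le_sum (range n) T (T n) fun k hk => hT (mem_range.1 hk).le
    rw [div_le_div_iff₀ (hpos n) (by exact_mod_cast hn)]
    linarith
  exact squeeze_zero' (Eventually.of_forall fun n => div_nonneg (hT0 n) (hpos n).le)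
    (eventually_atTop.2 ⟨1, hbound⟩) tendsto_one_div_atTop_nhds_zero_nat

theorem tendsto_of_tendsto_two_mul_of_tendsto_two_mul_add_one {α : Type*} [TopologicalSpace α]
    {f : ℕ → α} {L : α} (heven : Tendsto (fun n => f (2 * n)) atTop (𝓝 L))
    (hodd : Tendsto (fun n => f (2 * n + 1)) atTop (𝓝 L)) : Tendsto f atTop (𝓝 L) := by
  intro s hs
  obtain ⟨N₀, hN₀⟩ := eventually_atTop.1 (heven hs)
  obtain ⟨N₁, hN₁⟩ := eventually_atTop.1 (hodd hs)
  refine eventually_atTop.2 ⟨2 * (N₀ + N₁), fun m hm => ?_⟩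
  obtain ⟨k, rfl | rfl⟩ := Nat.even_or_odd' m
  · exact hN₀ k (by omega)
  · exact hN₁ k (by omega)

end RealSequences

section ThreeTermRecurrence

structure PringsheimScaling (b d : ℕ → ℂ) (ρ : ℕ → ℝ) : Prop where
  pos : ∀ n, 0 < ρ n
  two_le_norm_mul : ∀ n, 2 ≤ ‖b n‖ * ρ (n + 1)
  norm_mul_mul_le_one : ∀ n, ‖d n‖ * ρ n * ρ (n + 1) ≤ 1

noncomputable def scaledNorm (q : ℕ → ℂ) (ρ : ℕ → ℝ) (n : ℕ) : ℝ := ‖q n‖ * ∏ k ∈ range n, ρ k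

noncomputable def weightProd (d : ℕ → ℂ) (ρ : ℕ → ℝ) (n : ℕ) : ℝ :=
  ∏ k ∈ range n, ‖d k‖ * ρ k * ρ (k + 1)

variable {p q b d : ℕ → ℂ} {ρ : ℕ → ℝ}

theorem weightProd_succ (n : ℕ) :
    weightProd d ρ (n + 1) = weightProd d ρ n * (‖d n‖ * ρ n * ρ (n + 1)) :=
  prod_range_succ _ n

theorem weightProd_nonneg (hS : PringsheimScaling b d ρ) (n : ℕ) : 0 ≤ weightProd d ρ n :=
  prod_nonneg fun k _ => mul_nonneg (mul_nonneg (norm_nonneg _) (hS.pos k).le) (hS.pos (k + 1)).le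

theorem det_eq_prod_mul (hp : ∀ n, p (n + 2) = b n * p (n + 1) - d n * p n)
    (hq : ∀ n, q (n + 2) = b n * q (n + 1) - d n * q n) (n : ℕ) :
    p (n + 1) * q n - p n * q (n + 1) = (∏ k ∈ range n, d k) * (p 1 * q 0 - p 0 * q 1) := by
  induction n with
  | zero => simp
  | succ n ih =>
    rw [prod_range_succ, hp n, hq n]
    linear_combination d n * ih

theorem norm_det_mul_prod (hp : ∀ n, p (n + 2) = b n * p (n + 1) - d n * p n)
    (hq : ∀ n, q (n + 2) = b n * q (n + 1) - d n * q n) (n : ℕ) :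
    ‖p (n + 1) * q n - p n * q (n + 1)‖ * ((∏ k ∈ range n, ρ k) * ∏ k ∈ range (n + 1), ρ k) =
      ‖p 1 * q 0 - p 0 * q 1‖ * ρ 0 * weightProd d ρ n := by
  simp only [det_eq_prod_mul hp hq n, weightProd, norm_mul, norm_prod, prod_mul_distrib,
    prod_range_succ' ρ]
  ring

theorem scaledNorm_two_mul_sub_le (hS : PringsheimScaling b d ρ)
    (hq : ∀ n, q (n + 2) = b n * q (n + 1) - d n * q n) (n : ℕ) :
    2 * scaledNorm q ρ (n + 1) - ‖d n‖ * ρ n * ρ (n + 1) * scaledNorm q ρ n ≤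
      scaledNorm q ρ (n + 2) := by
  have hP : 0 ≤ ∏ k ∈ range n, ρ k := prod_nonneg fun k _ => (hS.pos k).le
  have hnorm : ‖b n‖ * ‖q (n + 1)‖ - ‖d n‖ * ‖q n‖ ≤ ‖q (n + 2)‖ := by
    simpa [hq n] using norm_sub_norm_le (b n * q (n + 1)) (d n * q n)
  have hb := mul_le_mul_of_nonneg_right (hS.two_le_norm_mul n)
    (mul_nonneg (mul_nonneg (norm_nonneg (q (n + 1))) hP) (hS.pos n).le)
  have := mul_le_mul_of_nonneg_right hnorm
    (mul_nonneg (mul_nonneg hP (hS.pos n).le) (hS.pos (n + 1)).le)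
  simp only [scaledNorm, prod_range_succ]
  nlinarith

theorem one_add_sum_weightProd_le_scaledNorm (hS : PringsheimScaling b d ρ)
    (hq : ∀ n, q (n + 2) = b n * q (n + 1) - d n * q n) (hq0 : q 0 = 1)
    (hq1 : 2 ≤ ‖q 1‖ * ρ 0) (n : ℕ) :
    1 + ∑ k ∈ range n, weightProd d ρ k ≤ scaledNorm q ρ n :=
  one_add_sum_prod_le_of_two_mul_sub_le (by simp [scaledNorm, hq0])
    (by simpa [scaledNorm] using hq1)
    (fun k => mul_nonneg (mul_nonneg (norm_nonneg _) (hS.pos k).le) (hS.pos (k + 1)).le)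
    hS.norm_mul_mul_le_one (scaledNorm_two_mul_sub_le hS hq) n

theorem antitone_weightProd (hS : PringsheimScaling b d ρ) : Antitone (weightProd d ρ) :=
  antitone_nat_of_succ_le fun n => by
    rw [weightProd_succ]
    exact mul_le_of_le_one_right (weightProd_nonneg hS n) (hS.norm_mul_mul_le_one n)

variable (hS : PringsheimScaling b d ρ) (hq : ∀ n, q (n + 2) = b n * q (n + 1) - d n * q n)
  (hq0 : q 0 = 1) (hq1 : 2 ≤ ‖q 1‖ * ρ 0)
include hS hq hq0 hq1

theorem one_le_scaledNorm (n : ℕ) : 1 ≤ scaledNorm q ρ n := by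
  linarith [one_add_sum_weightProd_le_scaledNorm hS hq hq0 hq1 n,
    sum_nonneg fun k (_ : k ∈ range n) => weightProd_nonneg hS k]

theorem ne_zero_of_pringsheimScaling (n : ℕ) : q n ≠ 0 := fun h => by
  have := one_le_scaledNorm hS hq hq0 hq1 n
  simp only [scaledNorm, h, norm_zero, zero_mul] at this
  linarith

theorem tendsto_weightProd_div_scaledNorm :
    Tendsto (fun n => weightProd d ρ n / scaledNorm q ρ n) atTop (𝓝 0) := by
  refine squeeze_zero (fun n => div_nonneg (weightProd_nonneg hS n)
      (zero_le_one.trans (one_le_scaledNorm hS hq hq0 hq1 n)))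
    (fun n => ?_)
    (tendsto_div_one_add_sum_of_antitone (antitone_weightProd hS) (weightProd_nonneg hS))
  exact div_le_div_of_nonneg_left (weightProd_nonneg hS n)
    (by linarith [sum_nonneg fun k (_ : k ∈ range n) => weightProd_nonneg hS k])
    (one_add_sum_weightProd_le_scaledNorm hS hq hq0 hq1 n)

theorem cauchySeq_div_of_pringsheimScaling (hp : ∀ n, p (n + 2) = b n * p (n + 1) - d n * p n) :
    CauchySeq fun n => p n / q n := by
  set U : ℕ → ℝ := fun n => 1 + ∑ k ∈ range n, weightProd d ρ k
  have hU : ∀ n, 0 < U n := fun n => by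
    linarith [sum_nonneg fun k (_ : k ∈ range n) => weightProd_nonneg hS k]
  have hUsucc : ∀ n, U (n + 1) - U n = weightProd d ρ n := fun n => by
    simp only [U, sum_range_succ]; ring
  have hUX := one_add_sum_weightProd_le_scaledNorm hS hq hq0 hq1
  have hdist : ∀ n, dist (p n / q n) (p (n + 1) / q (n + 1)) ≤
      ‖p 1 * q 0 - p 0 * q 1‖ * ρ 0 * (1 / U n - 1 / U (n + 1)) := fun n => by
    have hq' := ne_zero_of_pringsheimScaling hS hq hq0 hq1
    have hP : ∀ n, 0 < ∏ k ∈ range n, ρ k := fun n => prod_pos fun k _ => hS.pos k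
    rw [dist_eq_norm, div_sub_div _ _ (hq' n) (hq' (n + 1)), norm_div, norm_mul, ← norm_neg,
      show -(p n * q (n + 1) - q n * p (n + 1)) = p (n + 1) * q n - p n * q (n + 1) by ring]
    calc ‖p (n + 1) * q n - p n * q (n + 1)‖ / (‖q n‖ * ‖q (n + 1)‖)
        = ‖p 1 * q 0 - p 0 * q 1‖ * ρ 0 * weightProd d ρ n /
            (scaledNorm q ρ n * scaledNorm q ρ (n + 1)) := by
          rw [← norm_det_mul_prod hp hq n, scaledNorm, scaledNorm]
          field_simp [(hP n).ne', (hP (n + 1)).ne']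
      _ ≤ ‖p 1 * q 0 - p 0 * q 1‖ * ρ 0 * weightProd d ρ n / (U n * U (n + 1)) :=
          div_le_div_of_nonneg_left
            (mul_nonneg (mul_nonneg (norm_nonneg _) (hS.pos 0).le) (weightProd_nonneg hS n))
            (mul_pos (hU n) (hU (n + 1))) (mul_le_mul (hUX n) (hUX (n + 1)) (hU (n + 1)).le
              (zero_le_one.trans (one_le_scaledNorm hS hq hq0 hq1 n)))
      _ = ‖p 1 * q 0 - p 0 * q 1‖ * ρ 0 * (1 / U n - 1 / U (n + 1)) := by
          rw [← hUsucc]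
          field_simp [(hU n).ne', (hU (n + 1)).ne']
  refine cauchySeq_of_summable_dist (Summable.of_nonneg_of_le (fun n => dist_nonneg) hdist ?_)
  refine (summable_sub_succ_of_antitone (fun m n hmn => ?_)
    fun n => (one_div_pos.2 (hU n)).le).mul_left _
  refine one_div_le_one_div_of_le (hU m) (add_le_add_right ?_ 1)
  exact sum_le_sum_of_subset_of_nonneg (range_mono hmn) fun k _ _ => weightProd_nonneg hS k

end ThreeTermRecurrence

section ContinuedFraction

/-! Here `X (n+1)` is the canonical `X_n`, so `X (2n+1)` carries the even approximants. -/

variable {a A B X : ℕ → ℂ}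

theorem add_four_eq_of_recurrence (hX : ∀ n, X (n + 2) = X (n + 1) + a (n + 1) * X n) (k : ℕ) :
    X (k + 4) = (1 + a (k + 3) + a (k + 2)) * X (k + 2) - a (k + 2) * a (k + 1) * X k := by
  linear_combination hX (k + 2) + hX (k + 1) - a (k + 2) * hX k

theorem even_part_recurrence (hX : ∀ n, X (n + 2) = X (n + 1) + a (n + 1) * X n) (n : ℕ) :
    X (2 * (n + 2) + 1) =
      (1 + a (2 * n + 4) + a (2 * n + 3)) * X (2 * (n + 1) + 1) -
        a (2 * n + 3) * a (2 * n + 2) * X (2 * n + 1) :=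
  add_four_eq_of_recurrence hX (2 * n + 1)

theorem odd_part_recurrence (hX : ∀ n, X (n + 2) = X (n + 1) + a (n + 1) * X n) (n : ℕ) :
    X (2 * (n + 2) + 2) =
      (1 + a (2 * n + 5) + a (2 * n + 4)) * X (2 * (n + 1) + 2) -
        a (2 * n + 4) * a (2 * n + 3) * X (2 * n + 2) :=
  add_four_eq_of_recurrence hX (2 * n + 2)

theorem norm_det_eq_prod (hA : ∀ n, A (n + 2) = A (n + 1) + a (n + 1) * A n)
    (hB : ∀ n, B (n + 2) = B (n + 1) + a (n + 1) * B n)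
    (hA0 : A 0 = 1) (hA1 : A 1 = 0) (hB0 : B 0 = 0) (hB1 : B 1 = 1) (m : ℕ) :
    ‖A (m + 1) * B m - A m * B (m + 1)‖ = ∏ j ∈ range m, ‖a (j + 1)‖ := by
  have hrec : ∀ {Y : ℕ → ℂ}, (∀ n, Y (n + 2) = Y (n + 1) + a (n + 1) * Y n) →
      ∀ n, Y (n + 2) = 1 * Y (n + 1) - (-a (n + 1)) * Y n := fun hY n => by rw [hY n]; ring
  rw [det_eq_prod_mul (hrec hA) (hrec hB), hA0, hA1, hB0, hB1]
  simp [norm_prod]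

theorem prod_norm_mul_sq_eq_weightProd (a : ℕ → ℂ) (ρ : ℕ → ℝ) (n : ℕ) :
    (∏ j ∈ range (2 * n + 1), ‖a (j + 1)‖) * (∏ k ∈ range n, ρ k) ^ 2 *
        (‖a (2 * n + 2)‖ * ρ n) =
      ‖a 1‖ * ‖a 2‖ * ρ 0 * weightProd (fun k => a (2 * k + 4) * a (2 * k + 3)) ρ n := by
  induction n with
  | zero => simp [weightProd]; ring
  | succ n ih =>
    rw [weightProd_succ, show 2 * (n + 1) + 1 = 2 * n + 1 + 1 + 1 by ring,
      prod_range_succ _ (2 * n + 1 + 1), prod_range_succ _ (2 * n + 1), prod_range_succ ρ n,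
      norm_mul]
    linear_combination (‖a (2 * n + 4)‖ * ‖a (2 * n + 3)‖ * ρ n * ρ (n + 1)) * ih

end ContinuedFraction

section ConditionOne

noncomputable def scale (a : ℕ → ℂ) (β : ℕ → ℝ) (n : ℕ) : ℝ :=
  2 / (β (n + 1) * ‖a (2 * n + 2)‖)

theorem mul_norm_le_norm_one_add_add {z x : ℂ} {c β : ℝ} (hz : c + 1 ≤ (1 - β) * ‖z‖)
    (hx : ‖x‖ ≤ c) : β * ‖z‖ ≤ ‖1 + z + x‖ := by
  have : ‖z‖ ≤ ‖1 + z + x‖ + (1 + ‖x‖) := by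
    calc ‖z‖ = ‖(1 + z + x) - (1 + x)‖ := by ring_nf
      _ ≤ ‖1 + z + x‖ + ‖1 + x‖ := norm_sub_le _ _
      _ ≤ ‖1 + z + x‖ + (1 + ‖x‖) := by gcongr; simpa using norm_add_le 1 x
  linarith

theorem mul_two_div_mul_two_div_le_one {u s t : ℝ} (hs : 0 < s) (ht : 0 < t)
    (h : 4 * u ≤ s * t) : u * (2 / s) * (2 / t) ≤ 1 := by
  rw [show u * (2 / s) * (2 / t) = 4 * u / (s * t) by field_simp; ring,
    div_le_one (by positivity)]
  exact h

theorem four_mul_le_of_le_div {x z c s B : ℝ} (hs : 0 < s) (hB : 0 ≤ B)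
    (h : x ≤ B * (c + 1) / (4 * s)) (hz : c + 1 ≤ s * z) : 4 * x ≤ B * z := by
  have : B * (c + 1) / (4 * s) ≤ B * (s * z) / (4 * s) := by gcongr
  rw [show B * (s * z) / (4 * s) = B * z / 4 by field_simp] at this
  linarith

variable {a A B : ℕ → ℂ} {c β : ℕ → ℝ}
  (hc : ∀ n : ℕ, 1 ≤ n → 0 < c n)
  (hβ : ∀ n : ℕ, 1 ≤ n → 0 < β n ∧ β n < 1)
  (heven : ∀ n : ℕ, 1 ≤ n → (c n + 1) / (1 - β n) ≤ ‖a (2 * n)‖)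
  (hodd : ∀ n : ℕ, 1 ≤ n →
      ‖a (2 * n + 1)‖ ≤
        min (min (c n) (c (n + 1)))
          (min (β n * β (n + 1) * (c (n + 1) + 1) / (4 * (1 - β (n + 1))))
               (β n * β (n + 1) * (c n + 1) / (4 * (1 - β n)))))

include hβ heven in
theorem add_one_le_mul_norm {m : ℕ} (hm : 1 ≤ m) : c m + 1 ≤ (1 - β m) * ‖a (2 * m)‖ :=
  (div_le_iff₀' (sub_pos.2 (hβ m hm).2)).1 (heven m hm)

include hc hβ heven in
theorem norm_even_pos {m : ℕ} (hm : 1 ≤ m) : 0 < ‖a (2 * m)‖ :=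
  pos_of_mul_pos_right ((by linarith [hc m hm] : (0 : ℝ) < c m + 1).trans_le
    (add_one_le_mul_norm hβ heven hm)) (sub_pos.2 (hβ m hm).2).le

include hc hβ heven in
theorem scale_denom_pos (n : ℕ) : 0 < β (n + 1) * ‖a (2 * n + 2)‖ :=
  mul_pos (hβ (n + 1) le_add_self).1 (norm_even_pos hc hβ heven le_add_self)

include hc hβ heven in
theorem scale_pos (n : ℕ) : 0 < scale a β n :=
  div_pos two_pos (scale_denom_pos hc hβ heven n)

include hc hβ heven in
theorem two_le_norm_one_add_add_mul_scale (n : ℕ) {x : ℂ} (hx : ‖x‖ ≤ c (n + 1)) :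
    2 ≤ ‖1 + a (2 * n + 2) + x‖ * scale a β n := by
  have hz : c (n + 1) + 1 ≤ (1 - β (n + 1)) * ‖a (2 * n + 2)‖ :=
    add_one_le_mul_norm hβ heven le_add_self
  rw [scale, mul_div_assoc', le_div_iff₀ (scale_denom_pos hc hβ heven n)]
  linarith [mul_norm_le_norm_one_add_add hz hx]

include hβ heven hodd in
theorem four_mul_norm_odd_le_left (n : ℕ) :
    4 * ‖a (2 * n + 3)‖ ≤ β (n + 1) * β (n + 2) * ‖a (2 * n + 2)‖ := by
  have h : ‖a (2 * n + 3)‖ ≤ β (n + 1) * β (n + 2) * (c (n + 1) + 1) / (4 * (1 - β (n + 1))) :=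
    (hodd (n + 1) le_add_self).trans ((min_le_right _ _).trans (min_le_right _ _))
  have hz : c (n + 1) + 1 ≤ (1 - β (n + 1)) * ‖a (2 * n + 2)‖ :=
    add_one_le_mul_norm hβ heven le_add_self
  exact four_mul_le_of_le_div (sub_pos.2 (hβ (n + 1) le_add_self).2)
    (mul_pos (hβ (n + 1) le_add_self).1 (hβ (n + 2) le_add_self).1).le h hz

include hβ heven hodd in
theorem four_mul_norm_odd_le_right (n : ℕ) :
    4 * ‖a (2 * n + 3)‖ ≤ β (n + 1) * β (n + 2) * ‖a (2 * n + 4)‖ := by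
  have h : ‖a (2 * n + 3)‖ ≤ β (n + 1) * β (n + 2) * (c (n + 2) + 1) / (4 * (1 - β (n + 2))) :=
    (hodd (n + 1) le_add_self).trans ((min_le_right _ _).trans (min_le_left _ _))
  have hz : c (n + 2) + 1 ≤ (1 - β (n + 2)) * ‖a (2 * n + 4)‖ :=
    add_one_le_mul_norm hβ heven (m := n + 2) le_add_self
  exact four_mul_le_of_le_div (sub_pos.2 (hβ (n + 2) le_add_self).2)
    (mul_pos (hβ (n + 1) le_add_self).1 (hβ (n + 2) le_add_self).1).le h hz

include hc hβ heven in
theorem two_le_norm_mul_scale (n : ℕ) : 2 ≤ ‖a (2 * n + 2)‖ * scale a β n := by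
  have hz : 0 < ‖a (2 * n + 2)‖ := norm_even_pos hc hβ heven le_add_self
  rw [scale, mul_div_assoc', le_div_iff₀ (scale_denom_pos hc hβ heven n)]
  nlinarith [(hβ (n + 1) le_add_self).2]

include hc hβ heven hodd in
theorem pringsheimScaling_even_part :
    PringsheimScaling (fun n => 1 + a (2 * n + 4) + a (2 * n + 3))
      (fun n => a (2 * n + 3) * a (2 * n + 2)) (scale a β) where
  pos := scale_pos hc hβ heven
  two_le_norm_mul n := two_le_norm_one_add_add_mul_scale hc hβ heven (n + 1)
    ((hodd (n + 1) le_add_self).trans ((min_le_left _ _).trans (min_le_right _ _)))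
  norm_mul_mul_le_one n := by
    refine mul_two_div_mul_two_div_le_one (scale_denom_pos hc hβ heven n)
      (scale_denom_pos hc hβ heven (n + 1)) ?_
    have h : 4 * ‖a (2 * n + 3)‖ ≤ β (n + 1) * β (n + 2) * ‖a (2 * n + 4)‖ :=
      four_mul_norm_odd_le_right hβ heven hodd n
    show 4 * ‖a (2 * n + 3) * a (2 * n + 2)‖ ≤
      β (n + 1) * ‖a (2 * n + 2)‖ * (β (n + 2) * ‖a (2 * n + 4)‖)
    rw [norm_mul]
    nlinarith [norm_nonneg (a (2 * n + 2))]

include hc hβ heven hodd in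
theorem pringsheimScaling_odd_part :
    PringsheimScaling (fun n => 1 + a (2 * n + 5) + a (2 * n + 4))
      (fun n => a (2 * n + 4) * a (2 * n + 3)) (scale a β) where
  pos := scale_pos hc hβ heven
  two_le_norm_mul n := by
    rw [add_right_comm]
    exact two_le_norm_one_add_add_mul_scale hc hβ heven (n + 1)
      ((hodd (n + 2) le_add_self).trans ((min_le_left _ _).trans (min_le_left _ _)))
  norm_mul_mul_le_one n := by
    refine mul_two_div_mul_two_div_le_one (scale_denom_pos hc hβ heven n)
      (scale_denom_pos hc hβ heven (n + 1)) ?_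
    have h : 4 * ‖a (2 * n + 3)‖ ≤ β (n + 1) * β (n + 2) * ‖a (2 * n + 2)‖ :=
      four_mul_norm_odd_le_left hβ heven hodd n
    show 4 * ‖a (2 * n + 4) * a (2 * n + 3)‖ ≤
      β (n + 1) * ‖a (2 * n + 2)‖ * (β (n + 2) * ‖a (2 * n + 4)‖)
    rw [norm_mul]
    nlinarith [norm_nonneg (a (2 * n + 4))]

include hc hβ heven in
theorem prod_norm_mul_sq_le_weightProd (n : ℕ) :
    (∏ j ∈ range (2 * n + 1), ‖a (j + 1)‖) * (∏ k ∈ range n, scale a β k) ^ 2 ≤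
      ‖a 1‖ * ‖a 2‖ * scale a β 0 / 2 *
        weightProd (fun k => a (2 * k + 4) * a (2 * k + 3)) (scale a β) n := by
  have hD : 0 ≤ (∏ j ∈ range (2 * n + 1), ‖a (j + 1)‖) * (∏ k ∈ range n, scale a β k) ^ 2 := by
    positivity
  nlinarith [prod_norm_mul_sq_eq_weightProd a (scale a β) n,
    mul_le_mul_of_nonneg_left (two_le_norm_mul_scale hc hβ heven n) hD]

variable (hB : ∀ n, B (n + 2) = B (n + 1) + a (n + 1) * B n) (hB0 : B 0 = 0) (hB1 : B 1 = 1)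

include hc hβ heven hB hB0 hB1 in
theorem two_le_norm_denom_three_mul_scale : 2 ≤ ‖B 3‖ * scale a β 0 := by
  have hB3 : B 3 = 1 + a 2 + 0 := by rw [hB 1, hB 0, hB0, hB1]; ring
  rw [hB3]
  exact two_le_norm_one_add_add_mul_scale hc hβ heven 0 (by simpa using (hc 1 le_rfl).le)

include hc hβ heven hodd hB hB0 hB1 in
theorem two_le_norm_denom_four_mul_scale : 2 ≤ ‖B 4‖ * scale a β 0 := by
  have hB4 : B 4 = 1 + a 2 + a 3 := by rw [hB 2, hB 1, hB 0, hB0, hB1]; norm_num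
  rw [hB4]
  exact two_le_norm_one_add_add_mul_scale hc hβ heven 0
    ((hodd 1 le_rfl).trans ((min_le_left _ _).trans (min_le_left _ _)))

variable (hA : ∀ n, A (n + 2) = A (n + 1) + a (n + 1) * A n)

include hc hβ heven hodd hA hB hB0 hB1

theorem cauchySeq_even_approximants : CauchySeq fun n => A (2 * n + 1) / B (2 * n + 1) :=
  cauchySeq_div_of_pringsheimScaling (pringsheimScaling_even_part hc hβ heven hodd)
    (even_part_recurrence hB) hB1 (two_le_norm_denom_three_mul_scale hc hβ heven hB hB0 hB1)
    (even_part_recurrence hA)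

variable (hA0 : A 0 = 1) (hA1 : A 1 = 0)
include hA0 hA1

theorem norm_odd_sub_even_approximants_le (n : ℕ) :
    ‖A (2 * n + 2) / B (2 * n + 2) - A (2 * n + 1) / B (2 * n + 1)‖ ≤
      ‖a 1‖ * ‖a 2‖ * scale a β 0 / 2 *
        (weightProd (fun k => a (2 * k + 4) * a (2 * k + 3)) (scale a β) n /
          scaledNorm (fun k => B (2 * k + 2)) (scale a β) n) := by
  have hB2 : B 2 = 1 := by rw [hB 0, hB0, hB1]; ring
  have hSe := pringsheimScaling_even_part hc hβ heven hodd
  have hSo := pringsheimScaling_odd_part hc hβ heven hodd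
  have hqe := two_le_norm_denom_three_mul_scale hc hβ heven hB hB0 hB1
  have hqo := two_le_norm_denom_four_mul_scale hc hβ heven hodd hB hB0 hB1
  have hBe := ne_zero_of_pringsheimScaling (q := fun k => B (2 * k + 1)) hSe
    (even_part_recurrence hB) hB1 hqe n
  have hBo := ne_zero_of_pringsheimScaling (q := fun k => B (2 * k + 2)) hSo
    (odd_part_recurrence hB) hB2 hqo n
  have hXe := one_le_scaledNorm (q := fun k => B (2 * k + 1)) hSe
    (even_part_recurrence hB) hB1 hqe n
  have hXo := zero_lt_one.trans_le
    (one_le_scaledNorm (q := fun k => B (2 * k + 2)) hSo (odd_part_recurrence hB) hB2 hqo n)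
  have hP : 0 < ∏ k ∈ range n, scale a β k := prod_pos fun k _ => scale_pos hc hβ heven k
  have hbound := prod_norm_mul_sq_le_weightProd hc hβ heven n
  calc ‖A (2 * n + 2) / B (2 * n + 2) - A (2 * n + 1) / B (2 * n + 1)‖
      = (∏ j ∈ range (2 * n + 1), ‖a (j + 1)‖) * (∏ k ∈ range n, scale a β k) ^ 2 /
          (scaledNorm (fun k => B (2 * k + 2)) (scale a β) n *
            scaledNorm (fun k => B (2 * k + 1)) (scale a β) n) := by
        rw [div_sub_div _ _ hBo hBe, norm_div, norm_mul, mul_comm (B (2 * n + 2)),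
          norm_det_eq_prod hA hB hA0 hA1 hB0 hB1 (2 * n + 1)]
        simp only [scaledNorm]
        field_simp
    _ ≤ ‖a 1‖ * ‖a 2‖ * scale a β 0 / 2 *
          weightProd (fun k => a (2 * k + 4) * a (2 * k + 3)) (scale a β) n /
          (scaledNorm (fun k => B (2 * k + 2)) (scale a β) n * 1) :=
        div_le_div₀ ((by positivity : (0 : ℝ) ≤ _).trans hbound) hbound (by simpa using hXo)
          (mul_le_mul_of_nonneg_left hXe hXo.le)
    _ = _ := by ring

theorem tendsto_odd_sub_even_approximants :
    Tendsto (fun n => A (2 * n + 2) / B (2 * n + 2) - A (2 * n + 1) / B (2 * n + 1))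
      atTop (𝓝 0) := by
  have hlim := tendsto_weightProd_div_scaledNorm (q := fun k => B (2 * k + 2))
    (pringsheimScaling_odd_part hc hβ heven hodd) (odd_part_recurrence hB)
    (by rw [hB 0, hB0, hB1]; ring) (two_le_norm_denom_four_mul_scale hc hβ heven hodd hB hB0 hB1)
  exact squeeze_zero_norm (norm_odd_sub_even_approximants_le hc hβ heven hodd hB hB0 hB1 hA hA0 hA1)
    (by simpa using hlim.const_mul (‖a 1‖ * ‖a 2‖ * scale a β 0 / 2))

end ConditionOne

theorem main_theorem_cond1_general (a : ℕ → ℂ) (c β : ℕ → ℝ)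
    (hc : ∀ n : ℕ, 1 ≤ n → 0 < c n)
    (hβ : ∀ n : ℕ, 1 ≤ n → 0 < β n ∧ β n < 1)
    (heven : ∀ n : ℕ, 1 ≤ n → (c n + 1) / (1 - β n) ≤ ‖a (2 * n)‖)
    (hodd : ∀ n : ℕ, 1 ≤ n →
      ‖a (2 * n + 1)‖ ≤
        min (min (c n) (c (n + 1)))
          (min (β n * β (n + 1) * (c (n + 1) + 1) / (4 * (1 - β (n + 1))))
               (β n * β (n + 1) * (c n + 1) / (4 * (1 - β n)))))
    (A B : ℕ → ℂ)
    (hA0 : A 0 = 1) (hA1 : A 1 = 0) (hB0 : B 0 = 0) (hB1 : B 1 = 1)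
    (hArec : ∀ N : ℕ, 1 ≤ N → A (N + 1) = A N + a N * A (N - 1))
    (hBrec : ∀ N : ℕ, 1 ≤ N → B (N + 1) = B N + a N * B (N - 1)) :
    ∃ L : ℂ, Tendsto (fun N : ℕ => A (N + 1) / B (N + 1)) atTop (𝓝 L) := by
  have hA : ∀ n, A (n + 2) = A (n + 1) + a (n + 1) * A n := fun n => hArec (n + 1) le_add_self
  have hB : ∀ n, B (n + 2) = B (n + 1) + a (n + 1) * B n := fun n => hBrec (n + 1) le_add_self
  obtain ⟨L, hL⟩ := cauchySeq_tendsto_of_complete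
    (cauchySeq_even_approximants hc hβ heven hodd hB hB0 hB1 hA)
  refine ⟨L, tendsto_of_tendsto_two_mul_of_tendsto_two_mul_add_one hL ?_⟩
  simpa using hL.add (tendsto_odd_sub_even_approximants hc hβ heven hodd hB hB0 hB1 hA hA0 hA1)

/-- Main convergence theorem, condition (1).
Indexing: `A (N+1)` is the `N`-th canonical numerator (so `A 0 = A_{-1} = 1`). -/
theorem main_theorem_cond1 (a : ℕ → ℂ) (c β : ℕ → ℝ)
    (ha : ∀ n : ℕ, 1 ≤ n → a n ≠ 0)
    (hc : ∀ n : ℕ, 1 ≤ n → 0 < c n)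
    (hβ : ∀ n : ℕ, 1 ≤ n → 0 < β n ∧ β n < 1)
    (heven : ∀ n : ℕ, 1 ≤ n → (c n + 1) / (1 - β n) ≤ ‖a (2 * n)‖)
    (hodd : ∀ n : ℕ, 1 ≤ n →
      ‖a (2 * n + 1)‖ ≤
        min (min (c n) (c (n + 1)))
          (min (β n * β (n + 1) * (c (n + 1) + 1) / (4 * (1 - β (n + 1))))
               (β n * β (n + 1) * (c n + 1) / (4 * (1 - β n)))))
    (A B : ℕ → ℂ)
    (hA0 : A 0 = 1) (hA1 : A 1 = 0) (hB0 : B 0 = 0) (hB1 : B 1 = 1)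
    (hArec : ∀ N : ℕ, 1 ≤ N → A (N + 1) = A N + a N * A (N - 1))
    (hBrec : ∀ N : ℕ, 1 ≤ N → B (N + 1) = B N + a N * B (N - 1)) :
    ∃ L : ℂ, Tendsto (fun N : ℕ => A (N + 1) / B (N + 1)) atTop (𝓝 L) :=
  main_theorem_cond1_general a c β hc hβ heven hodd A B hA0 hA1 hB0 hB1 hArec hBrec
end

section
/- Let (d_n) be an increasing sequence of positive reals with d_n > 25 for all n ≥ 1, and let (a_n) be a sequence of nonzero complex numbers with |a_{2n}| ≥ d_n and |a_{2n+1}| ≤ (4/25)·d_n for all n ≥ 1. Then the continued fraction K_{n=1}^∞ a_n/1 converges to a finite complex value. -/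
open Filter Topology

/-! Write `B` for the denominators. Because the even-indexed partial numerators dominate both `25`
and the following odd-indexed one, `B (2m+2)` stays within a quarter of `B (2m+1)` for every `m`;
consequently `‖a (2m+2)‖ ‖B (2m+1)‖ ≤ (20/19) ‖B (2m+3)‖` and
`‖a (2m+3)‖ ‖B (2m+2)‖ ≤ (1/3) ‖B (2m+4)‖`. By the determinant formula the gap between two
consecutive approximants is multiplied by `‖a (N+2)‖ ‖B (N+1)‖ / ‖B (N+3)‖` at each step, so the
gaps shrink by at least `20/57` over every two steps. They are therefore summable, and the
approximants form a Cauchy sequence. -/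

theorem div_sub_div_eq_of_three_term_recurrence {K : Type*} [Field K] {α A₀ A₁ A₂ B₀ B₁ B₂ : K}
    (hA : A₂ = A₁ + α * A₀) (hB : B₂ = B₁ + α * B₀)
    (h₀ : B₀ ≠ 0) (h₁ : B₁ ≠ 0) (h₂ : B₂ ≠ 0) :
    A₂ / B₂ - A₁ / B₁ = -(α * B₀ / B₂) * (A₁ / B₁ - A₀ / B₀) := by
  rw [div_sub_div _ _ h₂ h₁, div_sub_div _ _ h₁ h₀]
  field_simp
  rw [hA, hB]
  ring

theorem dist_approximants_succ_le {𝕜 : Type*} [NormedField 𝕜] {a A B : ℕ → 𝕜}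
    (hArec : ∀ N : ℕ, 1 ≤ N → A (N + 1) = A N + a N * A (N - 1))
    (hBrec : ∀ N : ℕ, 1 ≤ N → B (N + 1) = B N + a N * B (N - 1))
    (hBne : ∀ N : ℕ, 1 ≤ N → B N ≠ 0) {c : ℝ} (N : ℕ)
    (hc : ‖a (N + 2)‖ * ‖B (N + 1)‖ ≤ c * ‖B (N + 3)‖) :
    dist (A (N + 2) / B (N + 2)) (A (N + 3) / B (N + 3)) ≤
      c * dist (A (N + 1) / B (N + 1)) (A (N + 2) / B (N + 2)) := by
  have h₃ : 0 < ‖B (N + 3)‖ := norm_pos_iff.mpr (hBne _ (by omega))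
  have hfactor : ‖a (N + 2)‖ * ‖B (N + 1)‖ / ‖B (N + 3)‖ ≤ c := (div_le_iff₀ h₃).mpr hc
  rw [dist_comm, dist_eq_norm, div_sub_div_eq_of_three_term_recurrence (hArec (N + 2) (by omega))
    (hBrec (N + 2) (by omega)) (hBne _ (by omega)) (hBne _ (by omega)) (hBne _ (by omega)),
    norm_mul, norm_neg, norm_div, norm_mul, ← dist_eq_norm, dist_comm]
  exact mul_le_mul_of_nonneg_right hfactor dist_nonneg

theorem summable_of_even_odd_ratio_le {T : ℕ → ℝ} {C q : ℝ} (hT : ∀ n, 0 ≤ T n) (hq : 0 ≤ q)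
    (hqC : q * C < 1) (hodd : ∀ m, T (2 * m + 1) ≤ C * T (2 * m))
    (heven : ∀ m, T (2 * m + 2) ≤ q * T (2 * m + 1)) : Summable T := by
  have hE : Summable fun m => T (2 * m) := by
    refine summable_of_ratio_norm_eventually_le hqC (Eventually.of_forall fun m => ?_)
    rw [Real.norm_of_nonneg (hT _), Real.norm_of_nonneg (hT _), mul_assoc]
    exact (heven m).trans (mul_le_mul_of_nonneg_left (hodd m) hq)
  have hO : Summable fun m => T (2 * m + 1) :=
    (hE.mul_left C).of_nonneg_of_le (fun _ => hT _) hodd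
  exact hE.even_add_odd hO

section Denominators

variable {𝕜 : Type*} [NormedField 𝕜]

theorem norm_mul_le_of_norm_sub_le {x y α : 𝕜} (hxy : ‖y - x‖ ≤ ‖x‖ / 4) (hα : 25 < ‖α‖) :
    ‖α‖ * ‖x‖ ≤ 20 / 19 * ‖y + α * x‖ := by
  have hy : ‖y‖ ≤ ‖x‖ + ‖y - x‖ := norm_le_insert' y x
  have hz : ‖α * x‖ ≤ ‖y + α * x‖ + ‖y‖ := by
    simpa only [add_sub_cancel_left] using norm_sub_le (y + α * x) y
  rw [norm_mul] at hz
  nlinarith [mul_le_mul_of_nonneg_right hα.le (norm_nonneg x)]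

theorem norm_mul_le_norm_add_div_four {x y α β : 𝕜} (hxy : ‖y - x‖ ≤ ‖x‖ / 4) (hα : 25 < ‖α‖)
    (hβ : ‖β‖ ≤ 4 / 25 * ‖α‖) : ‖β‖ * ‖y‖ ≤ ‖y + α * x‖ / 4 := by
  have hy : ‖y‖ ≤ ‖x‖ + ‖y - x‖ := norm_le_insert' y x
  have hαx := norm_mul_le_of_norm_sub_le hxy hα
  calc ‖β‖ * ‖y‖ ≤ 4 / 25 * ‖α‖ * (5 / 4 * ‖x‖) := by gcongr; linarith
    _ = 4 / 19 * (19 / 20 * (‖α‖ * ‖x‖)) := by ring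
    _ ≤ ‖y + α * x‖ / 4 := by nlinarith [norm_nonneg (y + α * x)]

variable {a B : ℕ → 𝕜}

theorem denominator_ne_zero_and_norm_sub_le (hα : ∀ n : ℕ, 1 ≤ n → 25 < ‖a (2 * n)‖)
    (hβ : ∀ n : ℕ, 1 ≤ n → ‖a (2 * n + 1)‖ ≤ 4 / 25 * ‖a (2 * n)‖)
    (hB0 : B 0 = 0) (hB1 : B 1 ≠ 0)
    (hBrec : ∀ N : ℕ, 1 ≤ N → B (N + 1) = B N + a N * B (N - 1)) (m : ℕ) :
    B (2 * m + 1) ≠ 0 ∧ ‖B (2 * m + 2) - B (2 * m + 1)‖ ≤ ‖B (2 * m + 1)‖ / 4 := by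
  induction m with
  | zero =>
    have hB2 : B 2 = B 1 := by simpa [hB0] using hBrec 1 le_rfl
    refine ⟨hB1, ?_⟩
    simp only [Nat.mul_zero, Nat.zero_add, hB2, sub_self, norm_zero]
    positivity
  | succ m ih =>
    show B (2 * m + 3) ≠ 0 ∧ ‖B (2 * m + 4) - B (2 * m + 3)‖ ≤ ‖B (2 * m + 3)‖ / 4
    obtain ⟨hx, hxy⟩ := ih
    have hz : B (2 * m + 3) = B (2 * m + 2) + a (2 * m + 2) * B (2 * m + 1) := hBrec _ (by omega)
    have hw : B (2 * m + 4) = B (2 * m + 3) + a (2 * m + 3) * B (2 * m + 2) := hBrec _ (by omega)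
    have hαm : 25 < ‖a (2 * m + 2)‖ := hα (m + 1) (by omega)
    have hαx := norm_mul_le_of_norm_sub_le hxy hαm
    rw [← hz] at hαx
    have hαx_pos : 0 < ‖a (2 * m + 2)‖ * ‖B (2 * m + 1)‖ :=
      mul_pos (by linarith) (norm_pos_iff.mpr hx)
    refine ⟨norm_pos_iff.mp (by linarith), ?_⟩
    rw [hw, add_sub_cancel_left, norm_mul, hz]
    exact norm_mul_le_norm_add_div_four hxy hαm (hβ (m + 1) (by omega))

theorem denominator_ne_zero (hα : ∀ n : ℕ, 1 ≤ n → 25 < ‖a (2 * n)‖)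
    (hβ : ∀ n : ℕ, 1 ≤ n → ‖a (2 * n + 1)‖ ≤ 4 / 25 * ‖a (2 * n)‖)
    (hB0 : B 0 = 0) (hB1 : B 1 ≠ 0)
    (hBrec : ∀ N : ℕ, 1 ≤ N → B (N + 1) = B N + a N * B (N - 1)) (N : ℕ) (hN : 1 ≤ N) :
    B N ≠ 0 := by
  obtain ⟨m, rfl | rfl⟩ : ∃ m, N = 2 * m + 1 ∨ N = 2 * m + 2 := ⟨(N - 1) / 2, by omega⟩
  · exact (denominator_ne_zero_and_norm_sub_le hα hβ hB0 hB1 hBrec m).1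
  · obtain ⟨hx, hxy⟩ := denominator_ne_zero_and_norm_sub_le hα hβ hB0 hB1 hBrec m
    have hy := norm_sub_norm_le (B (2 * m + 1)) (B (2 * m + 2))
    rw [norm_sub_rev] at hy
    have hx_pos := norm_pos_iff.mpr hx
    exact norm_pos_iff.mp (by linarith)

theorem denominator_ratio_le (hα : ∀ n : ℕ, 1 ≤ n → 25 < ‖a (2 * n)‖)
    (hβ : ∀ n : ℕ, 1 ≤ n → ‖a (2 * n + 1)‖ ≤ 4 / 25 * ‖a (2 * n)‖)
    (hB0 : B 0 = 0) (hB1 : B 1 ≠ 0)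
    (hBrec : ∀ N : ℕ, 1 ≤ N → B (N + 1) = B N + a N * B (N - 1)) (m : ℕ) :
    ‖a (2 * m + 2)‖ * ‖B (2 * m + 1)‖ ≤ 20 / 19 * ‖B (2 * m + 3)‖ ∧
      ‖a (2 * m + 3)‖ * ‖B (2 * m + 2)‖ ≤ 1 / 3 * ‖B (2 * m + 4)‖ := by
  have hz : B (2 * m + 3) = B (2 * m + 2) + a (2 * m + 2) * B (2 * m + 1) := hBrec _ (by omega)
  have hxy := (denominator_ne_zero_and_norm_sub_le hα hβ hB0 hB1 hBrec m).2
  have hzw : ‖B (2 * m + 4) - B (2 * m + 3)‖ ≤ ‖B (2 * m + 3)‖ / 4 :=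
    (denominator_ne_zero_and_norm_sub_le hα hβ hB0 hB1 hBrec (m + 1)).2
  have hαm : 25 < ‖a (2 * m + 2)‖ := hα (m + 1) (by omega)
  have hβm : ‖a (2 * m + 3)‖ ≤ 4 / 25 * ‖a (2 * m + 2)‖ := hβ (m + 1) (by omega)
  have hβy := norm_mul_le_norm_add_div_four hxy hαm hβm
  rw [← hz] at hβy
  refine ⟨hz ▸ norm_mul_le_of_norm_sub_le hxy hαm, ?_⟩
  have hw := norm_sub_norm_le (B (2 * m + 3)) (B (2 * m + 4))
  rw [norm_sub_rev] at hw
  linarith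

end Denominators

theorem corollary_unbounded_general (a : ℕ → ℂ) (d : ℕ → ℝ)
    (hd : ∀ n : ℕ, 1 ≤ n → 25 < d n)
    (heven : ∀ n : ℕ, 1 ≤ n → d n ≤ ‖a (2 * n)‖)
    (hodd : ∀ n : ℕ, 1 ≤ n → ‖a (2 * n + 1)‖ ≤ (4 / 25) * d n)
    (A B : ℕ → ℂ)
    (hB0 : B 0 = 0) (hB1 : B 1 = 1)
    (hArec : ∀ N : ℕ, 1 ≤ N → A (N + 1) = A N + a N * A (N - 1))
    (hBrec : ∀ N : ℕ, 1 ≤ N → B (N + 1) = B N + a N * B (N - 1)) :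
    ∃ L : ℂ, Tendsto (fun N : ℕ => A (N + 1) / B (N + 1)) atTop (𝓝 L) := by
  have hα : ∀ n : ℕ, 1 ≤ n → 25 < ‖a (2 * n)‖ := fun n hn => (hd n hn).trans_le (heven n hn)
  have hβ : ∀ n : ℕ, 1 ≤ n → ‖a (2 * n + 1)‖ ≤ 4 / 25 * ‖a (2 * n)‖ := fun n hn =>
    (hodd n hn).trans (by gcongr; exact heven n hn)
  have hB1' : B 1 ≠ 0 := hB1 ▸ one_ne_zero
  have hBne := denominator_ne_zero hα hβ hB0 hB1' hBrec
  have hratio := denominator_ratio_le hα hβ hB0 hB1' hBrec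
  set T : ℕ → ℝ := fun N => dist (A (N + 1) / B (N + 1)) (A (N + 2) / B (N + 2))
  have hT : Summable T :=
    summable_of_even_odd_ratio_le (fun _ => dist_nonneg) (by norm_num : (0 : ℝ) ≤ 1 / 3)
      (by norm_num : (1 / 3 : ℝ) * (20 / 19) < 1)
      (fun m => dist_approximants_succ_le hArec hBrec hBne (2 * m) (hratio m).1)
      (fun m => dist_approximants_succ_le hArec hBrec hBne (2 * m + 1) (hratio m).2)
  exact cauchySeq_tendsto_of_complete (cauchySeq_of_dist_le_of_summable T (fun _ => le_rfl) hT)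

/-- Corollary: unbounded partial numerators. -/
theorem corollary_unbounded (a : ℕ → ℂ) (d : ℕ → ℝ)
    (ha : ∀ n : ℕ, 1 ≤ n → a n ≠ 0)
    (hd_mono : ∀ m n : ℕ, 1 ≤ m → m < n → d m < d n)
    (hd : ∀ n : ℕ, 1 ≤ n → 25 < d n)
    (heven : ∀ n : ℕ, 1 ≤ n → d n ≤ ‖a (2 * n)‖)
    (hodd : ∀ n : ℕ, 1 ≤ n → ‖a (2 * n + 1)‖ ≤ (4 / 25) * d n)
    (A B : ℕ → ℂ)
    (hA0 : A 0 = 1) (hA1 : A 1 = 0) (hB0 : B 0 = 0) (hB1 : B 1 = 1)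
    (hArec : ∀ N : ℕ, 1 ≤ N → A (N + 1) = A N + a N * A (N - 1))
    (hBrec : ∀ N : ℕ, 1 ≤ N → B (N + 1) = B N + a N * B (N - 1)) :
    ∃ L : ℂ, Tendsto (fun N : ℕ => A (N + 1) / B (N + 1)) atTop (𝓝 L) :=
  corollary_unbounded_general a d hd heven hodd A B hB0 hB1 hArec hBrec
end

section
/- Let c > 0 and let (a_n) be a sequence of nonzero complex numbers such that |a_{2n}| ≥ 1 + 3c + 2√c·√(2c+1) and |a_{2n+1}| ≤ c for all n ≥ 1. Then the continued fraction K_{n=1}^∞ a_n/1 converges to a finite complex value. -/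
/-!
Write `f N = A (N + 1) / B (N + 1)`. Consecutive approximants differ by the Casoratian of `A` and
`B` over two consecutive denominators, and the Casoratian is multiplied by `-a (k + 1)` at each
step, so `dist (f (N + 1)) (f (N + 2)) ≤ ρ * dist (f N) (f (N + 1))` as soon as
`‖a (N + 2)‖ ‖B (N + 1)‖ ≤ ρ ‖B (N + 3)‖`.

Take `M = c + √c √(2c+1)`. By induction, `‖B (2n+2)‖ ≤ (1 + c/M) ‖B (2n+1)‖` (a small coefficient
barely changes `‖B‖`), and then the large coefficient `a (2n+2)` forces
`‖B (2n+3)‖ ≥ M ‖B (2n+2)‖`. This gives `ρ = (M + 1)/M` for `N` even and `ρ = c/(M - c)` for `N`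
odd, and `c (1 + M) < M (M - c)` makes their product `< 1`, so the distances between consecutive
approximants are dominated by a geometric series.
-/

open Filter Topology

theorem summable_of_alternating_ratio_le {u : ℕ → ℝ} {ρ σ : ℝ} (hu : ∀ n, 0 ≤ u n)
    (hρ : 0 ≤ ρ) (hσ : 0 ≤ σ) (hρσ : ρ * σ < 1) (hodd : ∀ n, u (2 * n + 1) ≤ ρ * u (2 * n))
    (heven : ∀ n, u (2 * n + 2) ≤ σ * u (2 * n + 1)) : Summable u := by
  have hgeom : ∀ n, u (2 * n) ≤ u 0 * (ρ * σ) ^ n := by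
    intro n
    induction n with
    | zero => simp
    | succ n ih =>
      calc u (2 * (n + 1)) ≤ σ * (ρ * u (2 * n)) :=
            (heven n).trans (mul_le_mul_of_nonneg_left (hodd n) hσ)
        _ ≤ σ * (ρ * (u 0 * (ρ * σ) ^ n)) := by gcongr
        _ = u 0 * (ρ * σ) ^ (n + 1) := by ring
  have hs := summable_geometric_of_lt_one (mul_nonneg hρ hσ) hρσ
  refine Summable.even_add_odd ((hs.mul_left (u 0)).of_nonneg_of_le (fun _ ↦ hu _) hgeom)
    ((hs.mul_left (ρ * u 0)).of_nonneg_of_le (fun _ ↦ hu _) fun n ↦ ?_)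
  calc u (2 * n + 1) ≤ ρ * (u 0 * (ρ * σ) ^ n) :=
        (hodd n).trans (mul_le_mul_of_nonneg_left (hgeom n) hρ)
    _ = ρ * u 0 * (ρ * σ) ^ n := by ring

section Casoratian

variable {K : Type*} [Field K] {a A B : ℕ → K}

def casoratian (A B : ℕ → K) (k : ℕ) : K := A (k + 1) * B k - A k * B (k + 1)

theorem casoratian_succ (hA : ∀ j, A (j + 2) = A (j + 1) + a (j + 1) * A j)
    (hB : ∀ j, B (j + 2) = B (j + 1) + a (j + 1) * B j) (k : ℕ) :
    casoratian A B (k + 1) = -a (k + 1) * casoratian A B k := by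
  rw [casoratian, casoratian, hA, hB]
  ring

end Casoratian

section Approximants

variable {K : Type*} [NormedField K] {a A B : ℕ → K}

theorem dist_div_div_eq_casoratian {k : ℕ} (hk : B k ≠ 0) (hk' : B (k + 1) ≠ 0) :
    dist (A k / B k) (A (k + 1) / B (k + 1)) =
      ‖casoratian A B k‖ / (‖B k‖ * ‖B (k + 1)‖) := by
  rw [dist_comm, dist_eq_norm, div_sub_div _ _ hk' hk, norm_div, norm_mul, mul_comm ‖B (k + 1)‖,
    casoratian, mul_comm (B (k + 1))]

theorem dist_div_div_succ_le (hA : ∀ j, A (j + 2) = A (j + 1) + a (j + 1) * A j)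
    (hB : ∀ j, B (j + 2) = B (j + 1) + a (j + 1) * B j) {k : ℕ} (h₀ : B k ≠ 0)
    (h₁ : B (k + 1) ≠ 0) (h₂ : B (k + 2) ≠ 0) {ρ : ℝ}
    (hρ : ‖a (k + 1)‖ * ‖B k‖ ≤ ρ * ‖B (k + 2)‖) :
    dist (A (k + 1) / B (k + 1)) (A (k + 2) / B (k + 2)) ≤
      ρ * dist (A k / B k) (A (k + 1) / B (k + 1)) := by
  rw [dist_div_div_eq_casoratian h₁ h₂, dist_div_div_eq_casoratian h₀ h₁, casoratian_succ hA hB,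
    norm_mul, norm_neg]
  have hB₀ := norm_pos_iff.2 h₀
  have hB₁ := norm_pos_iff.2 h₁
  have hB₂ := norm_pos_iff.2 h₂
  calc ‖a (k + 1)‖ * ‖casoratian A B k‖ / (‖B (k + 1)‖ * ‖B (k + 2)‖)
      = ‖a (k + 1)‖ * ‖B k‖ * (‖casoratian A B k‖ / (‖B k‖ * ‖B (k + 1)‖)) / ‖B (k + 2)‖ := by
        field_simp
    _ ≤ ρ * ‖B (k + 2)‖ * (‖casoratian A B k‖ / (‖B k‖ * ‖B (k + 1)‖)) / ‖B (k + 2)‖ := by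
        gcongr
    _ = ρ * (‖casoratian A B k‖ / (‖B k‖ * ‖B (k + 1)‖)) := by
        field_simp

end Approximants

section Denominators

variable {K : Type*} [NormedField K] {a B : ℕ → K} {c M : ℝ}

theorem abs_norm_sub_norm_le_of_rec (hB : ∀ j, B (j + 2) = B (j + 1) + a (j + 1) * B j)
    (j : ℕ) : |‖B (j + 2)‖ - ‖B (j + 1)‖| ≤ ‖a (j + 1)‖ * ‖B j‖ := by
  simpa [hB] using abs_norm_sub_norm_le (B (j + 2)) (B (j + 1))

theorem norm_mul_sub_norm_le_of_rec (hB : ∀ j, B (j + 2) = B (j + 1) + a (j + 1) * B j)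
    (j : ℕ) : ‖a (j + 1)‖ * ‖B j‖ - ‖B (j + 1)‖ ≤ ‖B (j + 2)‖ := by
  have := norm_le_add_norm_add' (B (j + 1)) (a (j + 1) * B j)
  rw [← hB, norm_mul] at this
  linarith

theorem growth_of_large_coeff (hB : ∀ j, B (j + 2) = B (j + 1) + a (j + 1) * B j) (hM : 0 < M)
    {j : ℕ} (hj : 0 ≤ ‖B j‖) (h : M * ‖B (j + 1)‖ ≤ (M + c) * ‖B j‖)
    (ha : (1 + c / M) * (1 + M) ≤ ‖a (j + 1)‖) :
    (M + c) * ‖B j‖ ≤ ‖B (j + 2)‖ ∧ M * ‖a (j + 1)‖ * ‖B j‖ ≤ (M + 1) * ‖B (j + 2)‖ := by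
  have ha' : (M + c) * (1 + M) ≤ M * ‖a (j + 1)‖ :=
    calc (M + c) * (1 + M) = M * ((1 + c / M) * (1 + M)) := by field_simp
      _ ≤ M * ‖a (j + 1)‖ := by gcongr
  have hlow := mul_le_mul_of_nonneg_left (norm_mul_sub_norm_le_of_rec hB j) hM.le
  have hx := mul_le_mul_of_nonneg_right ha' hj
  constructor
  · refine le_of_mul_le_mul_left ?_ hM
    nlinarith
  · refine le_of_mul_le_mul_left ?_ hM
    nlinarith

theorem growth_of_small_coeff (hB : ∀ j, B (j + 2) = B (j + 1) + a (j + 1) * B j) (hc : 0 ≤ c)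
    (hM : 0 ≤ M) {j : ℕ} (hj : 0 ≤ ‖B j‖) (h : M * ‖B j‖ ≤ ‖B (j + 1)‖) (ha : ‖a (j + 1)‖ ≤ c) :
    M * ‖B (j + 2)‖ ≤ (M + c) * ‖B (j + 1)‖ ∧ (M - c) * ‖B (j + 1)‖ ≤ M * ‖B (j + 2)‖ ∧
      (M - c) * ‖a (j + 1)‖ * ‖B j‖ ≤ c * ‖B (j + 2)‖ := by
  obtain ⟨hup, hdown⟩ := abs_le.1 (abs_norm_sub_norm_le_of_rec hB j)
  have hy : ‖a (j + 1)‖ * ‖B j‖ ≤ c * ‖B j‖ := mul_le_mul_of_nonneg_right ha hj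
  have hcM : c * (M * ‖B j‖) ≤ c * ‖B (j + 1)‖ := mul_le_mul_of_nonneg_left h hc
  refine ⟨?_, ?_, ?_⟩
  · nlinarith [mul_le_mul_of_nonneg_left hy hM]
  · nlinarith [mul_le_mul_of_nonneg_left hy hM]
  · nlinarith [mul_le_mul_of_nonneg_left hdown hc, mul_nonneg hM (sub_nonneg.2 ha)]

theorem denominators_bounds (hB : ∀ j, B (j + 2) = B (j + 1) + a (j + 1) * B j) (hB₀ : B 0 = 0)
    (hB₁ : B 1 = 1) (hc : 0 ≤ c) (hcM : c < M)
    (heven : ∀ n, (1 + c / M) * (1 + M) ≤ ‖a (2 * n + 2)‖) (hodd : ∀ n, ‖a (2 * n + 3)‖ ≤ c)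
    (n : ℕ) :
    0 < ‖B (2 * n + 1)‖ ∧ 0 < ‖B (2 * n + 2)‖ ∧ M * ‖B (2 * n + 2)‖ ≤ (M + c) * ‖B (2 * n + 1)‖ := by
  have hM : 0 < M := hc.trans_lt hcM
  induction n with
  | zero =>
    have hB₂ : B 2 = 1 := by rw [hB 0, hB₀, hB₁, mul_zero, add_zero]
    simp only [mul_zero, zero_add, hB₁, hB₂, norm_one]
    exact ⟨one_pos, one_pos, by linarith⟩
  | succ n ih =>
    obtain ⟨h₁, h₂, h₂₁⟩ := ih
    have h₃ : (M + c) * ‖B (2 * n + 1)‖ ≤ ‖B (2 * n + 3)‖ :=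
      (growth_of_large_coeff hB hM h₁.le h₂₁ (heven n)).1
    have h₃₂ : M * ‖B (2 * n + 2)‖ ≤ ‖B (2 * n + 3)‖ := h₂₁.trans h₃
    obtain ⟨h₄₃, h₃₄, -⟩ := growth_of_small_coeff hB hc hM.le h₂.le h₃₂ (hodd n)
    have h₃pos : 0 < ‖B (2 * n + 3)‖ := lt_of_lt_of_le (by positivity) h₃
    refine ⟨h₃pos, pos_of_mul_pos_right ?_ hM.le, h₄₃⟩
    exact lt_of_lt_of_le (mul_pos (sub_pos.2 hcM) h₃pos) h₃₄

end Denominators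

theorem exists_tendsto_div_of_alternating_bounds {K : Type*} [NormedField K] [CompleteSpace K]
    {a A B : ℕ → K} {c M : ℝ} (hA : ∀ j, A (j + 2) = A (j + 1) + a (j + 1) * A j)
    (hB : ∀ j, B (j + 2) = B (j + 1) + a (j + 1) * B j) (hB₀ : B 0 = 0) (hB₁ : B 1 = 1)
    (hc : 0 ≤ c) (hM : 0 < M) (hcontr : c * (1 + M) < M * (M - c))
    (heven : ∀ n, (1 + c / M) * (1 + M) ≤ ‖a (2 * n + 2)‖) (hodd : ∀ n, ‖a (2 * n + 3)‖ ≤ c) :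
    ∃ L, Tendsto (fun N ↦ A (N + 1) / B (N + 1)) atTop (𝓝 L) := by
  have hcM : c < M := by nlinarith
  have hbounds := denominators_bounds hB hB₀ hB₁ hc hcM heven hodd
  have hne : ∀ k, B (k + 1) ≠ 0 := by
    intro k
    obtain ⟨n, rfl | rfl⟩ := Nat.even_or_odd' k
    · exact norm_pos_iff.1 (hbounds n).1
    · exact norm_pos_iff.1 (hbounds n).2.1
  have hsum : Summable fun N ↦ dist (A (N + 1) / B (N + 1)) (A (N + 2) / B (N + 2)) := by
    refine summable_of_alternating_ratio_le (fun _ ↦ dist_nonneg) (ρ := (M + 1) / M)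
      (σ := c / (M - c)) (by positivity) (div_nonneg hc (sub_nonneg.2 hcM.le)) ?_
      (fun n ↦ dist_div_div_succ_le hA hB (hne _) (hne _) (hne _) ?_)
      (fun n ↦ dist_div_div_succ_le hA hB (hne _) (hne _) (hne _) ?_)
    · rw [div_mul_div_comm, div_lt_one (mul_pos hM (sub_pos.2 hcM))]
      linarith
    · obtain ⟨h₁, -, h₂₁⟩ := hbounds n
      rw [div_mul_eq_mul_div, le_div_iff₀ hM, mul_comm _ M, ← mul_assoc]
      exact (growth_of_large_coeff hB hM h₁.le h₂₁ (heven n)).2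
    · obtain ⟨h₁, h₂, h₂₁⟩ := hbounds n
      have h₃₂ : M * ‖B (2 * n + 2)‖ ≤ ‖B (2 * n + 3)‖ :=
        h₂₁.trans (growth_of_large_coeff hB hM h₁.le h₂₁ (heven n)).1
      rw [div_mul_eq_mul_div, le_div_iff₀ (sub_pos.2 hcM), mul_comm _ (M - c), ← mul_assoc]
      exact (growth_of_small_coeff hB hc hM.le h₂.le h₃₂ (hodd n)).2.2
  exact cauchySeq_tendsto_of_complete (cauchySeq_of_summable_dist hsum)

theorem corollary_constant_general (a : ℕ → ℂ) (c : ℝ) (hc : 0 < c)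
    (heven : ∀ n : ℕ, 1 ≤ n →
      1 + 3 * c + 2 * Real.sqrt c * Real.sqrt (2 * c + 1) ≤ ‖a (2 * n)‖)
    (hodd : ∀ n : ℕ, 1 ≤ n → ‖a (2 * n + 1)‖ ≤ c)
    (A B : ℕ → ℂ)
    (hB0 : B 0 = 0) (hB1 : B 1 = 1)
    (hArec : ∀ N : ℕ, 1 ≤ N → A (N + 1) = A N + a N * A (N - 1))
    (hBrec : ∀ N : ℕ, 1 ≤ N → B (N + 1) = B N + a N * B (N - 1)) :
    ∃ L : ℂ, Tendsto (fun N : ℕ => A (N + 1) / B (N + 1)) atTop (𝓝 L) := by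
  set s := Real.sqrt c * Real.sqrt (2 * c + 1) with hs_def
  have hs : s ^ 2 = c * (2 * c + 1) := by
    rw [mul_pow, Real.sq_sqrt hc.le, Real.sq_sqrt (by linarith)]
  have hs₀ : 0 ≤ s := by positivity
  have hM : 0 < c + s := by positivity
  refine exists_tendsto_div_of_alternating_bounds (M := c + s) (fun j ↦ hArec (j + 1) j.succ_pos)
    (fun j ↦ hBrec (j + 1) j.succ_pos) hB0 hB1 hc.le hM (by nlinarith) (fun n ↦ ?_)
    (fun n ↦ hodd (n + 1) n.succ_pos)
  refine le_trans ?_ (heven (n + 1) n.succ_pos)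
  have hcs : c / (c + s) ≤ c + s := by
    rw [div_le_iff₀ hM]
    nlinarith
  calc (1 + c / (c + s)) * (1 + (c + s)) = 1 + c + (c + s) + c / (c + s) := by
        field_simp; ring
    _ ≤ 1 + 3 * c + 2 * s := by linarith
    _ = 1 + 3 * c + 2 * Real.sqrt c * Real.sqrt (2 * c + 1) := by rw [hs_def]; ring

/-- Corollary with constant bounds depending on `c`. -/
theorem corollary_constant (a : ℕ → ℂ) (c : ℝ) (hc : 0 < c)
    (ha : ∀ n : ℕ, 1 ≤ n → a n ≠ 0)
    (heven : ∀ n : ℕ, 1 ≤ n →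
      1 + 3 * c + 2 * Real.sqrt c * Real.sqrt (2 * c + 1) ≤ ‖a (2 * n)‖)
    (hodd : ∀ n : ℕ, 1 ≤ n → ‖a (2 * n + 1)‖ ≤ c)
    (A B : ℕ → ℂ)
    (hA0 : A 0 = 1) (hA1 : A 1 = 0) (hB0 : B 0 = 0) (hB1 : B 1 = 1)
    (hArec : ∀ N : ℕ, 1 ≤ N → A (N + 1) = A N + a N * A (N - 1))
    (hBrec : ∀ N : ℕ, 1 ≤ N → B (N + 1) = B N + a N * B (N - 1)) :
    ∃ L : ℂ, Tendsto (fun N : ℕ => A (N + 1) / B (N + 1)) atTop (𝓝 L) :=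
  corollary_constant_general a c hc heven hodd A B hB0 hB1 hArec hBrec
end

section
/- Let (a_n) be a sequence of nonzero complex numbers with |a_{2n}| ≥ 36/23 and |a_{2n+1}| ≤ 1/23 for all n ≥ 1. Then the continued fraction K_{n=1}^∞ a_n/1 converges to a finite complex value. -/
/-!
Split the denominators into the odd-indexed `B (2n+1)` and the even-indexed `B (2n+2)`.
Since the `a (2n+3)` are tiny, `B (2n+2)` stays within a quarter of `B (2n+1)`, and then the
large `a (2n+2)` makes the odd denominators grow: `‖B (2n+3)‖ ≥ (29/144) ‖a (2n+2)‖ ‖B (2n+1)‖`.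
By the determinant formula the distance between consecutive approximants is
`∏_{k ≤ N+1} ‖a k‖ / ‖B (N+1) B (N+2)‖`, and the growth of the denominators beats the
numerators by a factor `24/29` per step, so the approximants form a Cauchy sequence.
-/

open Filter Topology

/-- With the shifted indexing `A (N + 1) = A_N`, this is the classical determinant
`A_N B_{N-1} - A_{N-1} B_N`. -/
def crossDet (A B : ℕ → ℂ) (N : ℕ) : ℂ := A (N + 1) * B N - A N * B (N + 1)

section Approximants

variable {a A B : ℕ → ℂ}

theorem crossDet_succ (hArec : ∀ N : ℕ, 1 ≤ N → A (N + 1) = A N + a N * A (N - 1))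
    (hBrec : ∀ N : ℕ, 1 ≤ N → B (N + 1) = B N + a N * B (N - 1)) (N : ℕ) :
    crossDet A B (N + 1) = -a (N + 1) * crossDet A B N := by
  simp only [crossDet, hArec (N + 1) N.succ_pos, hBrec (N + 1) N.succ_pos, Nat.add_sub_cancel]
  ring

theorem norm_crossDet_one (hA0 : A 0 = 1) (hA1 : A 1 = 0) (hB1 : B 1 = 1)
    (hArec : ∀ N : ℕ, 1 ≤ N → A (N + 1) = A N + a N * A (N - 1))
    (hBrec : ∀ N : ℕ, 1 ≤ N → B (N + 1) = B N + a N * B (N - 1)) :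
    ‖crossDet A B 1‖ = ‖a 1‖ := by
  rw [crossDet_succ hArec hBrec 0, crossDet, hA0, hA1, hB1]
  simp

theorem dist_approximants_eq (N : ℕ) (hN : B (N + 1) ≠ 0) (hN' : B (N + 2) ≠ 0) :
    dist (A (N + 1) / B (N + 1)) (A (N + 2) / B (N + 2)) =
      ‖crossDet A B (N + 1)‖ / (‖B (N + 1)‖ * ‖B (N + 2)‖) := by
  rw [dist_eq_norm, div_sub_div _ _ hN hN', norm_div, norm_mul, ← norm_neg, crossDet]
  ring_nf

end Approximants

section Denominators

theorem norm_add_mul_ge {e o α : ℂ} (hα : 36 / 23 ≤ ‖α‖) (h : ‖o - e‖ ≤ ‖e‖ / 4) :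
    29 / 144 * ‖α‖ * ‖e‖ ≤ ‖o + α * e‖ := by
  have ho : ‖o‖ ≤ 5 / 4 * ‖e‖ := by
    have := norm_sub_norm_le o e
    linarith
  have hαe : 5 / 4 * ‖e‖ ≤ 115 / 144 * ‖α‖ * ‖e‖ := by
    nlinarith [norm_nonneg e]
  have := norm_sub_norm_le (α * e) (-o)
  rw [sub_neg_eq_add, norm_neg, norm_mul, add_comm] at this
  linarith

theorem norm_mul_le_norm_add_mul_div_four {e o α β : ℂ} (hα : 36 / 23 ≤ ‖α‖) (hβ : ‖β‖ ≤ 1 / 23)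
    (h : ‖o - e‖ ≤ ‖e‖ / 4) : ‖β * o‖ ≤ ‖o + α * e‖ / 4 := by
  have ho : ‖o‖ ≤ 5 / 4 * ‖e‖ := by
    have := norm_sub_norm_le o e
    linarith
  have hβo : ‖β * o‖ ≤ 1 / 23 * (5 / 4 * ‖e‖) := by
    rw [norm_mul]
    exact mul_le_mul hβ ho (norm_nonneg _) (by norm_num)
  have hαe : 29 / 144 * (36 / 23) * ‖e‖ ≤ 29 / 144 * ‖α‖ * ‖e‖ := by
    gcongr
  have := norm_add_mul_ge hα h
  linarith [norm_nonneg e]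

variable {a B : ℕ → ℂ}

theorem B_two_mul_add_three (hBrec : ∀ N : ℕ, 1 ≤ N → B (N + 1) = B N + a N * B (N - 1))
    (n : ℕ) : B (2 * n + 3) = B (2 * n + 2) + a (2 * n + 2) * B (2 * n + 1) :=
  hBrec (2 * n + 2) (by omega)

theorem B_two_mul_add_four (hBrec : ∀ N : ℕ, 1 ≤ N → B (N + 1) = B N + a N * B (N - 1))
    (n : ℕ) : B (2 * n + 4) = B (2 * n + 3) + a (2 * n + 3) * B (2 * n + 2) :=
  hBrec (2 * n + 3) (by omega)

theorem norm_B_even_sub_odd_le (hα : ∀ n : ℕ, 36 / 23 ≤ ‖a (2 * n + 2)‖)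
    (hβ : ∀ n : ℕ, ‖a (2 * n + 3)‖ ≤ 1 / 23) (hB0 : B 0 = 0)
    (hBrec : ∀ N : ℕ, 1 ≤ N → B (N + 1) = B N + a N * B (N - 1)) :
    ∀ n : ℕ, ‖B (2 * n + 2) - B (2 * n + 1)‖ ≤ ‖B (2 * n + 1)‖ / 4
  | 0 => by simpa [hBrec 1 le_rfl, hB0] using norm_nonneg (B 1 / 4)
  | n + 1 => by
    show ‖B (2 * n + 4) - B (2 * n + 3)‖ ≤ ‖B (2 * n + 3)‖ / 4
    rw [B_two_mul_add_four hBrec, add_sub_cancel_left, B_two_mul_add_three hBrec]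
    exact norm_mul_le_norm_add_mul_div_four (hα n) (hβ n)
      (norm_B_even_sub_odd_le hα hβ hB0 hBrec n)

theorem norm_B_even_ge (hα : ∀ n : ℕ, 36 / 23 ≤ ‖a (2 * n + 2)‖)
    (hβ : ∀ n : ℕ, ‖a (2 * n + 3)‖ ≤ 1 / 23) (hB0 : B 0 = 0)
    (hBrec : ∀ N : ℕ, 1 ≤ N → B (N + 1) = B N + a N * B (N - 1)) (n : ℕ) :
    3 / 4 * ‖B (2 * n + 1)‖ ≤ ‖B (2 * n + 2)‖ := by
  have := norm_B_even_sub_odd_le hα hβ hB0 hBrec n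
  have := norm_sub_norm_le (B (2 * n + 1)) (B (2 * n + 2))
  rw [norm_sub_rev] at this
  linarith

theorem norm_B_odd_succ_ge (hα : ∀ n : ℕ, 36 / 23 ≤ ‖a (2 * n + 2)‖)
    (hβ : ∀ n : ℕ, ‖a (2 * n + 3)‖ ≤ 1 / 23) (hB0 : B 0 = 0)
    (hBrec : ∀ N : ℕ, 1 ≤ N → B (N + 1) = B N + a N * B (N - 1)) (n : ℕ) :
    29 / 144 * ‖a (2 * n + 2)‖ * ‖B (2 * n + 1)‖ ≤ ‖B (2 * n + 3)‖ := by
  rw [B_two_mul_add_three hBrec]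
  exact norm_add_mul_ge (hα n) (norm_B_even_sub_odd_le hα hβ hB0 hBrec n)

theorem B_odd_ne_zero (hα : ∀ n : ℕ, 36 / 23 ≤ ‖a (2 * n + 2)‖)
    (hβ : ∀ n : ℕ, ‖a (2 * n + 3)‖ ≤ 1 / 23) (hB0 : B 0 = 0) (hB1 : B 1 = 1)
    (hBrec : ∀ N : ℕ, 1 ≤ N → B (N + 1) = B N + a N * B (N - 1)) :
    ∀ n : ℕ, B (2 * n + 1) ≠ 0
  | 0 => by simp [hB1]
  | n + 1 => by
    have hpos : 0 < 29 / 144 * ‖a (2 * n + 2)‖ * ‖B (2 * n + 1)‖ := by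
      have := hα n
      have := norm_pos_iff.2 (B_odd_ne_zero hα hβ hB0 hB1 hBrec n)
      positivity
    exact norm_pos_iff.1 (hpos.trans_le (norm_B_odd_succ_ge hα hβ hB0 hBrec n))

theorem B_succ_ne_zero (hα : ∀ n : ℕ, 36 / 23 ≤ ‖a (2 * n + 2)‖)
    (hβ : ∀ n : ℕ, ‖a (2 * n + 3)‖ ≤ 1 / 23) (hB0 : B 0 = 0) (hB1 : B 1 = 1)
    (hBrec : ∀ N : ℕ, 1 ≤ N → B (N + 1) = B N + a N * B (N - 1)) (N : ℕ) :
    B (N + 1) ≠ 0 := by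
  obtain ⟨n, rfl | rfl⟩ := Nat.even_or_odd' N
  · exact B_odd_ne_zero hα hβ hB0 hB1 hBrec n
  · have := norm_pos_iff.2 (B_odd_ne_zero hα hβ hB0 hB1 hBrec n)
    exact norm_pos_iff.1 (by linarith [norm_B_even_ge hα hβ hB0 hBrec n])

end Denominators

section Convergence

variable {a A B : ℕ → ℂ}

theorem norm_crossDet_odd_le (hα : ∀ n : ℕ, 36 / 23 ≤ ‖a (2 * n + 2)‖)
    (hβ : ∀ n : ℕ, ‖a (2 * n + 3)‖ ≤ 1 / 23) (hA0 : A 0 = 1) (hA1 : A 1 = 0)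
    (hB0 : B 0 = 0) (hB1 : B 1 = 1)
    (hArec : ∀ N : ℕ, 1 ≤ N → A (N + 1) = A N + a N * A (N - 1))
    (hBrec : ∀ N : ℕ, 1 ≤ N → B (N + 1) = B N + a N * B (N - 1)) :
    ∀ n : ℕ, ‖crossDet A B (2 * n + 1)‖ ≤ ‖a 1‖ * (24 / 29) ^ (2 * n) * ‖B (2 * n + 1)‖ ^ 2
  | 0 => by simp [norm_crossDet_one hA0 hA1 hB1 hArec hBrec, hB1]
  | n + 1 => by
    have ih := norm_crossDet_odd_le hα hβ hA0 hA1 hB0 hB1 hArec hBrec n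
    have hdet :
        crossDet A B (2 * n + 3) = a (2 * n + 3) * a (2 * n + 2) * crossDet A B (2 * n + 1) := by
      have h₁ : crossDet A B (2 * n + 3) = -a (2 * n + 3) * crossDet A B (2 * n + 2) :=
        crossDet_succ hArec hBrec (2 * n + 2)
      have h₂ : crossDet A B (2 * n + 2) = -a (2 * n + 2) * crossDet A B (2 * n + 1) :=
        crossDet_succ hArec hBrec (2 * n + 1)
      rw [h₁, h₂]
      ring
    set α := ‖a (2 * n + 2)‖
    set X := ‖a 1‖ * (24 / 29) ^ (2 * n) * ‖B (2 * n + 1)‖ ^ 2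
    have hX : 0 ≤ X := by positivity
    have hα₀ : 0 ≤ α := norm_nonneg _
    show ‖crossDet A B (2 * n + 3)‖ ≤ ‖a 1‖ * (24 / 29) ^ (2 * n + 2) * ‖B (2 * n + 3)‖ ^ 2
    -- `(24/29 * 29/144)^2 = 1/36`, so the step closes exactly because `α ≥ 36/23`
    calc ‖crossDet A B (2 * n + 3)‖ = ‖a (2 * n + 3)‖ * α * ‖crossDet A B (2 * n + 1)‖ := by
          rw [hdet, norm_mul, norm_mul]
      _ ≤ 1 / 23 * α * X := by gcongr; exact hβ n
      _ ≤ α ^ 2 / 36 * X := by gcongr; nlinarith [hα n]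
      _ = ‖a 1‖ * (24 / 29) ^ (2 * n + 2) * (29 / 144 * α * ‖B (2 * n + 1)‖) ^ 2 := by ring
      _ ≤ ‖a 1‖ * (24 / 29) ^ (2 * n + 2) * ‖B (2 * n + 3)‖ ^ 2 := by
          gcongr
          exact norm_B_odd_succ_ge hα hβ hB0 hBrec n

theorem dist_approximants_le (hα : ∀ n : ℕ, 36 / 23 ≤ ‖a (2 * n + 2)‖)
    (hβ : ∀ n : ℕ, ‖a (2 * n + 3)‖ ≤ 1 / 23) (hA0 : A 0 = 1) (hA1 : A 1 = 0)
    (hB0 : B 0 = 0) (hB1 : B 1 = 1)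
    (hArec : ∀ N : ℕ, 1 ≤ N → A (N + 1) = A N + a N * A (N - 1))
    (hBrec : ∀ N : ℕ, 1 ≤ N → B (N + 1) = B N + a N * B (N - 1)) (N : ℕ) :
    dist (A (N + 1) / B (N + 1)) (A (N + 2) / B (N + 2)) ≤ 8 * ‖a 1‖ * (24 / 29) ^ N := by
  have hB := B_succ_ne_zero hα hβ hB0 hB1 hBrec
  rw [dist_approximants_eq N (hB N) (hB (N + 1)), div_le_iff₀ (by simp [hB])]
  obtain ⟨n, rfl | rfl⟩ := Nat.even_or_odd' N
  · have hW := norm_crossDet_odd_le hα hβ hA0 hA1 hB0 hB1 hArec hBrec n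
    have hB₂ := norm_B_even_ge hα hβ hB0 hBrec n
    calc ‖crossDet A B (2 * n + 1)‖ ≤ ‖a 1‖ * (24 / 29) ^ (2 * n) * ‖B (2 * n + 1)‖ ^ 2 := hW
      _ ≤ 8 * ‖a 1‖ * (24 / 29) ^ (2 * n) * (‖B (2 * n + 1)‖ * (3 / 4 * ‖B (2 * n + 1)‖)) := by
          linarith [show 0 ≤ ‖a 1‖ * (24 / 29 : ℝ) ^ (2 * n) * ‖B (2 * n + 1)‖ ^ 2 by positivity]
      _ ≤ 8 * ‖a 1‖ * (24 / 29) ^ (2 * n) * (‖B (2 * n + 1)‖ * ‖B (2 * n + 2)‖) := by gcongr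
  · have hW := norm_crossDet_odd_le hα hβ hA0 hA1 hB0 hB1 hArec hBrec n
    have hB₂ := norm_B_even_ge hα hβ hB0 hBrec n
    have hB₃ := norm_B_odd_succ_ge hα hβ hB0 hBrec n
    have hdet : crossDet A B (2 * n + 2) = -a (2 * n + 2) * crossDet A B (2 * n + 1) :=
      crossDet_succ hArec hBrec (2 * n + 1)
    set α := ‖a (2 * n + 2)‖
    set b := ‖B (2 * n + 1)‖
    show ‖crossDet A B (2 * n + 2)‖ ≤
      8 * ‖a 1‖ * (24 / 29) ^ (2 * n + 1) * (‖B (2 * n + 2)‖ * ‖B (2 * n + 3)‖)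
    calc ‖crossDet A B (2 * n + 2)‖ = α * ‖crossDet A B (2 * n + 1)‖ := by
          rw [hdet, norm_mul, norm_neg]
      _ ≤ α * (‖a 1‖ * (24 / 29) ^ (2 * n) * b ^ 2) := by gcongr
      _ = 8 * ‖a 1‖ * (24 / 29) ^ (2 * n + 1) * (3 / 4 * b * (29 / 144 * α * b)) := by ring
      _ ≤ 8 * ‖a 1‖ * (24 / 29) ^ (2 * n + 1) * (‖B (2 * n + 2)‖ * ‖B (2 * n + 3)‖) := by gcongr

end Convergence

theorem example_36_23_general (a : ℕ → ℂ)
    (heven : ∀ n : ℕ, 1 ≤ n → (36 / 23 : ℝ) ≤ ‖a (2 * n)‖)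
    (hodd : ∀ n : ℕ, 1 ≤ n → ‖a (2 * n + 1)‖ ≤ (1 / 23 : ℝ))
    (A B : ℕ → ℂ)
    (hA0 : A 0 = 1) (hA1 : A 1 = 0) (hB0 : B 0 = 0) (hB1 : B 1 = 1)
    (hArec : ∀ N : ℕ, 1 ≤ N → A (N + 1) = A N + a N * A (N - 1))
    (hBrec : ∀ N : ℕ, 1 ≤ N → B (N + 1) = B N + a N * B (N - 1)) :
    ∃ L : ℂ, Tendsto (fun N : ℕ => A (N + 1) / B (N + 1)) atTop (𝓝 L) := by
  have hα : ∀ n : ℕ, 36 / 23 ≤ ‖a (2 * n + 2)‖ := fun n => heven (n + 1) n.succ_pos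
  have hβ : ∀ n : ℕ, ‖a (2 * n + 3)‖ ≤ 1 / 23 := fun n => hodd (n + 1) n.succ_pos
  exact cauchySeq_tendsto_of_complete <| cauchySeq_of_le_geometric (24 / 29) (8 * ‖a 1‖)
    (by norm_num) (dist_approximants_le hα hβ hA0 hA1 hB0 hB1 hArec hBrec)

/-- Example: |a_{2n}| ≥ 36/23, |a_{2n+1}| ≤ 1/23 gives convergence. -/
theorem example_36_23 (a : ℕ → ℂ)
    (ha : ∀ n : ℕ, 1 ≤ n → a n ≠ 0)
    (heven : ∀ n : ℕ, 1 ≤ n → (36 / 23 : ℝ) ≤ ‖a (2 * n)‖)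
    (hodd : ∀ n : ℕ, 1 ≤ n → ‖a (2 * n + 1)‖ ≤ (1 / 23 : ℝ))
    (A B : ℕ → ℂ)
    (hA0 : A 0 = 1) (hA1 : A 1 = 0) (hB0 : B 0 = 0) (hB1 : B 1 = 1)
    (hArec : ∀ N : ℕ, 1 ≤ N → A (N + 1) = A N + a N * A (N - 1))
    (hBrec : ∀ N : ℕ, 1 ≤ N → B (N + 1) = B N + a N * B (N - 1)) :
    ∃ L : ℂ, Tendsto (fun N : ℕ => A (N + 1) / B (N + 1)) atTop (𝓝 L) :=
  example_36_23_general a heven hodd A B hA0 hA1 hB0 hB1 hArec hBrec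
end

section
/- For c > 0, set β = 2(√c·√(2c+1) − c)/(c+1). Then 0 < β < 1, and (c+1)/(1−β) ≤ 1 + 3c + 2√c·√(2c+1), and c ≤ β²(c+1)/(4(1−β)). (These are the verifications needed to apply the main convergence theorem with constant sequences c_n = c, β_n = β.) -/
/-!
Write `s = √c·√(2c+1)`, so `s² = c(2c+1)` and `β = 2(s − c)/(c+1)`. Then `β` is the positive
root of `(c+1)β² = 4c(1 − β)`, which makes the last inequality an equality, and
`(3c+1−2s)(3c+1+2s) = (c+1)²` gives `1 − β = (c+1)/(3c+1+2s)`, which makes the third one an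
equality too.
-/

section

variable {c s : ℝ}

theorem lt_of_sq_eq_mul_two_mul_add_one (hc : 0 < c) (hs : 0 ≤ s)
    (hs2 : s ^ 2 = c * (2 * c + 1)) : c < s := by
  nlinarith

theorem one_sub_two_mul_sub_div_eq (hc : 0 < c) (hs : 0 ≤ s) (hs2 : s ^ 2 = c * (2 * c + 1)) :
    1 - 2 * (s - c) / (c + 1) = (c + 1) / (3 * c + 1 + 2 * s) := by
  rw [eq_div_iff (by positivity)]
  field_simp
  linear_combination -4 * hs2

theorem two_mul_sub_div_sq_mul_eq (hc : 0 < c) (hs2 : s ^ 2 = c * (2 * c + 1)) :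
    (2 * (s - c) / (c + 1)) ^ 2 * (c + 1) = 4 * c * (1 - 2 * (s - c) / (c + 1)) := by
  field_simp
  linear_combination 4 * hs2

end

/-- Verification of the hypotheses of the main theorem for constant sequences. -/
theorem beta_verification (c : ℝ) (hc : 0 < c) :
    let β := 2 * (Real.sqrt c * Real.sqrt (2 * c + 1) - c) / (c + 1)
    0 < β ∧ β < 1 ∧
      (c + 1) / (1 - β) ≤ 1 + 3 * c + 2 * Real.sqrt c * Real.sqrt (2 * c + 1) ∧
      c ≤ β ^ 2 * (c + 1) / (4 * (1 - β)) := by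
  intro β
  set s := Real.sqrt c * Real.sqrt (2 * c + 1)
  have hs : 0 ≤ s := by positivity
  have hs2 : s ^ 2 = c * (2 * c + 1) := by
    rw [mul_pow, Real.sq_sqrt hc.le, Real.sq_sqrt (by positivity)]
  have hcs := lt_of_sq_eq_mul_two_mul_add_one hc hs hs2
  have hβ : 1 - β = (c + 1) / (3 * c + 1 + 2 * s) := one_sub_two_mul_sub_div_eq hc hs hs2
  have hβ_lt : 0 < 1 - β := by rw [hβ]; positivity
  refine ⟨div_pos (by linarith) (by positivity), by linarith, ?_, ?_⟩
  · rw [hβ, div_div_cancel₀ (by positivity), mul_assoc]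
    linarith
  · rw [two_mul_sub_div_sq_mul_eq hc hs2, mul_div_mul_right _ _ hβ_lt.ne',
      mul_div_cancel_left₀ _ four_ne_zero]
end

section
/- Let (a_n) be a sequence of complex numbers satisfying the hypotheses of the main theorem (there exist sequences c_n > 0 and 0 < β_n < 1 with |a_{2n}| ≥ (c_n+1)/(1−β_n) and |a_{2n+1}| ≤ min{c_n, c_{n+1}, β_n β_{n+1}(c_{n+1}+1)/(4(1−β_{n+1})), β_n β_{n+1}(c_n+1)/(4(1−β_n))} for all n ≥ 1). Then the canonical denominators B_n of K_{n=1}^∞ a_n/1 satisfy |B_{2n+1}/B_{2n}| ≤ 3 for all n ≥ 1. -/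
/-!
Write `B_N` for the canonical denominator, i.e. `B (N + 1)` in the code.
By induction on `n`, `B_{2n} ≠ 0` and `‖B_{2n+1}‖ ≤ (1 + β_{n+1}/2) ‖B_{2n}‖`. The large even
coefficient makes `B_{2n+2} = B_{2n+1} + a_{2n+2} B_{2n}` dominated by its second term, so
`‖B_{2n+2}‖ ≥ (‖a_{2n+2}‖ - 1 - β_{n+1}/2) ‖B_{2n}‖`; the small odd coefficient then changes
`B_{2n+3} = B_{2n+2} + a_{2n+3} B_{2n+1}` by at most `β_{n+2}/2` times `‖B_{2n+2}‖`.
Since `β < 1`, the ratio is even at most `3/2`.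
-/

theorem ne_zero_and_norm_le_of_norm_le_mul {K : Type*} [NormedDivisionRing K]
    {u v w z p q : K} {ρ t : ℝ} (hw : w = v + p * u) (hz : z = w + q * v) (hu : u ≠ 0)
    (hv : ‖v‖ ≤ ρ * ‖u‖) (hρ : ρ < ‖p‖) (hq : ‖q‖ * ρ ≤ t * (‖p‖ - ρ)) :
    w ≠ 0 ∧ ‖z‖ ≤ (1 + t) * ‖w‖ := by
  have hu₀ : 0 < ‖u‖ := norm_pos_iff.mpr hu
  have hρ₀ : 0 ≤ ρ := nonneg_of_mul_nonneg_left ((norm_nonneg v).trans hv) hu₀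
  have ht : 0 ≤ t :=
    nonneg_of_mul_nonneg_left ((mul_nonneg (norm_nonneg q) hρ₀).trans hq) (sub_pos.mpr hρ)
  have hw_lower : (‖p‖ - ρ) * ‖u‖ ≤ ‖w‖ := by
    have h := norm_sub_le (v + p * u) v
    rw [add_sub_cancel_left, norm_mul, ← hw] at h
    linarith
  refine ⟨norm_pos_iff.mp ((mul_pos (sub_pos.mpr hρ) hu₀).trans_le hw_lower), ?_⟩
  calc ‖z‖ ≤ ‖w‖ + ‖q‖ * ‖v‖ := by rw [hz, ← norm_mul]; exact norm_add_le _ _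
    _ ≤ ‖w‖ + ‖q‖ * ρ * ‖u‖ := by rw [mul_assoc]; gcongr
    _ ≤ ‖w‖ + t * ((‖p‖ - ρ) * ‖u‖) := by rw [← mul_assoc]; gcongr
    _ ≤ ‖w‖ + t * ‖w‖ := by gcongr
    _ = (1 + t) * ‖w‖ := by ring

theorem mul_mul_one_add_half_le {β A : ℝ} (hβ₀ : 0 ≤ β) (hβ₁ : β < 1)
    (hA : 1 ≤ (1 - β) * A) : β * A * (1 + β / 2) ≤ 2 * (A - (1 + β / 2)) := by
  have hA₀ : 0 ≤ A := by nlinarith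
  -- `2 (A - ρ) - β A ρ = (2 + β) ((1 - β) A - 1) + β² A / 2` with `ρ = 1 + β / 2`
  nlinarith [mul_nonneg (by linarith : (0 : ℝ) ≤ 2 + β) (sub_nonneg.mpr hA),
    mul_nonneg (sq_nonneg β) hA₀]

theorem ne_zero_and_norm_succ_le_of_denominator_recurrence {K : Type*} [NormedDivisionRing K]
    (a B : ℕ → K) (β : ℕ → ℝ) (hβ : ∀ n : ℕ, 1 ≤ n → 0 < β n ∧ β n < 1)
    (heven : ∀ n : ℕ, 1 ≤ n → 1 ≤ (1 - β n) * ‖a (2 * n)‖)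
    (hodd : ∀ n : ℕ, 1 ≤ n → ‖a (2 * n + 1)‖ ≤ β n * β (n + 1) * ‖a (2 * n)‖ / 4)
    (hB0 : B 0 = 0) (hB1 : B 1 = 1)
    (hBrec : ∀ N : ℕ, 1 ≤ N → B (N + 1) = B N + a N * B (N - 1)) (n : ℕ) :
    B (2 * n + 1) ≠ 0 ∧ ‖B (2 * n + 2)‖ ≤ (1 + β (n + 1) / 2) * ‖B (2 * n + 1)‖ := by
  induction n with
  | zero =>
    have hB2 : B 2 = 1 := by simpa [hB0, hB1] using hBrec 1 le_rfl
    simpa [hB1, hB2] using half_pos (hβ 1 le_rfl).1 |>.le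
  | succ n ih =>
    show B (2 * n + 3) ≠ 0 ∧ ‖B (2 * n + 4)‖ ≤ (1 + β (n + 2) / 2) * ‖B (2 * n + 3)‖
    obtain ⟨hβ₀, hβ₁⟩ := hβ (n + 1) n.succ_pos
    have hA : 1 ≤ (1 - β (n + 1)) * ‖a (2 * n + 2)‖ := heven (n + 1) n.succ_pos
    have hkey := mul_mul_one_add_half_le hβ₀.le hβ₁ hA
    have hA₀ : 0 < ‖a (2 * n + 2)‖ := by nlinarith
    have hρA : 1 + β (n + 1) / 2 < ‖a (2 * n + 2)‖ := by
      have : 0 < β (n + 1) * ‖a (2 * n + 2)‖ * (1 + β (n + 1) / 2) := by positivity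
      linarith
    have hq : ‖a (2 * n + 3)‖ * (1 + β (n + 1) / 2) ≤
        β (n + 2) / 2 * (‖a (2 * n + 2)‖ - (1 + β (n + 1) / 2)) := by
      have hodd' : ‖a (2 * n + 3)‖ ≤ β (n + 1) * β (n + 2) * ‖a (2 * n + 2)‖ / 4 :=
        hodd (n + 1) n.succ_pos
      have hβ' := (hβ (n + 2) (by omega)).1
      calc ‖a (2 * n + 3)‖ * (1 + β (n + 1) / 2)
          ≤ β (n + 1) * β (n + 2) * ‖a (2 * n + 2)‖ / 4 * (1 + β (n + 1) / 2) := by gcongr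
        _ = β (n + 2) / 4 * (β (n + 1) * ‖a (2 * n + 2)‖ * (1 + β (n + 1) / 2)) := by ring
        _ ≤ β (n + 2) / 2 * (‖a (2 * n + 2)‖ - (1 + β (n + 1) / 2)) := by nlinarith
    exact ne_zero_and_norm_le_of_norm_le_mul (hBrec (2 * n + 2) (by omega))
      (hBrec (2 * n + 3) (by omega)) ih.1 ih.2 hρA hq

theorem denominator_ratio_bound_general (a : ℕ → ℂ) (c β : ℕ → ℝ)
    (hc : ∀ n : ℕ, 1 ≤ n → 0 < c n)
    (hβ : ∀ n : ℕ, 1 ≤ n → 0 < β n ∧ β n < 1)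
    (heven : ∀ n : ℕ, 1 ≤ n → (c n + 1) / (1 - β n) ≤ ‖a (2 * n)‖)
    (hodd : ∀ n : ℕ, 1 ≤ n →
      ‖a (2 * n + 1)‖ ≤
        min (min (c n) (c (n + 1)))
          (min (β n * β (n + 1) * (c (n + 1) + 1) / (4 * (1 - β (n + 1))))
               (β n * β (n + 1) * (c n + 1) / (4 * (1 - β n)))))
    (B : ℕ → ℂ)
    (hB0 : B 0 = 0) (hB1 : B 1 = 1)
    (hBrec : ∀ N : ℕ, 1 ≤ N → B (N + 1) = B N + a N * B (N - 1)) :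
    ∀ n : ℕ, 1 ≤ n → ‖B (2 * n + 2) / B (2 * n + 1)‖ ≤ 3 := by
  have heven' : ∀ n : ℕ, 1 ≤ n → 1 ≤ (1 - β n) * ‖a (2 * n)‖ := fun n hn => by
    have h := heven n hn
    rw [div_le_iff₀' (sub_pos.mpr (hβ n hn).2)] at h
    linarith [hc n hn]
  have hodd' : ∀ n : ℕ, 1 ≤ n → ‖a (2 * n + 1)‖ ≤ β n * β (n + 1) * ‖a (2 * n)‖ / 4 :=
    fun n hn => calc
      ‖a (2 * n + 1)‖ ≤ β n * β (n + 1) * (c n + 1) / (4 * (1 - β n)) :=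
        (hodd n hn).trans ((min_le_right _ _).trans (min_le_right _ _))
      _ = β n * β (n + 1) * ((c n + 1) / (1 - β n)) / 4 := by rw [mul_comm 4, ← div_div]; ring
      _ ≤ β n * β (n + 1) * ‖a (2 * n)‖ / 4 := by
        have hβ' := (hβ (n + 1) (by omega)).1
        gcongr
        exacts [(mul_pos (hβ n hn).1 hβ').le, heven n hn]
  intro n hn
  obtain ⟨hne, hle⟩ := ne_zero_and_norm_succ_le_of_denominator_recurrence a B β hβ heven' hodd'
    hB0 hB1 hBrec n
  rw [norm_div, div_le_iff₀ (norm_pos_iff.mpr hne)]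
  refine hle.trans ?_
  gcongr
  linarith [(hβ (n + 1) (by omega)).2]

/-- Under the hypotheses of the main theorem, |B_{2n+1}/B_{2n}| ≤ 3.
Indexing: `B (N+1)` is the `N`-th canonical denominator (so `B 0 = B_{-1} = 0`). -/
theorem denominator_ratio_bound (a : ℕ → ℂ) (c β : ℕ → ℝ)
    (ha : ∀ n : ℕ, 1 ≤ n → a n ≠ 0)
    (hc : ∀ n : ℕ, 1 ≤ n → 0 < c n)
    (hβ : ∀ n : ℕ, 1 ≤ n → 0 < β n ∧ β n < 1)
    (heven : ∀ n : ℕ, 1 ≤ n → (c n + 1) / (1 - β n) ≤ ‖a (2 * n)‖)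
    (hodd : ∀ n : ℕ, 1 ≤ n →
      ‖a (2 * n + 1)‖ ≤
        min (min (c n) (c (n + 1)))
          (min (β n * β (n + 1) * (c (n + 1) + 1) / (4 * (1 - β (n + 1))))
               (β n * β (n + 1) * (c n + 1) / (4 * (1 - β n)))))
    (B : ℕ → ℂ)
    (hB0 : B 0 = 0) (hB1 : B 1 = 1)
    (hBrec : ∀ N : ℕ, 1 ≤ N → B (N + 1) = B N + a N * B (N - 1)) :
    ∀ n : ℕ, 1 ≤ n → ‖B (2 * n + 2) / B (2 * n + 1)‖ ≤ 3 :=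
  denominator_ratio_bound_general a c β hc hβ heven hodd B hB0 hB1 hBrec
end

section
/- Let (a_n) be complex numbers with |a_n| ≤ 1/4 for all n ≥ 1. Then the continued fraction K_{n=1}^∞ a_n/1 converges; every approximant f_n lies in the open disc |w| < 1/2, and the value f of the continued fraction satisfies |f| ≤ 1/2. (Worpitzky's theorem.) -/
/-!
The denominators satisfy `‖B_{n+1}‖ ≥ ‖B_n‖ - ‖B_{n-1}‖ / 4`, so they dominate the
solution `(n + 1) / 2 ^ n` of the extremal recurrence (all `a_n = -1/4`). Together with the
determinant formula `A_{n+1} B_n - A_n B_{n+1} = ± a_1 ⋯ a_n` this bounds consecutive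
approximants by `‖f_{n+1} - f_n‖ ≤ 1 / (2 (n + 1)) - 1 / (2 (n + 2))`. These bounds telescope:
`(f_n)` is Cauchy and `‖f_n‖ ≤ 1/2 - 1 / (2 (n + 1))`, since `f_0 = 0`.
-/

open Filter Topology Finset

/-- Ratio form of the comparison with `c n = (n + 1) / 2 ^ n`, which solves
`c (n + 2) = c (n + 1) - c n / 4`. -/
theorem succ_mul_le_of_sub_quarter_le {g : ℕ → ℝ} (h01 : g 0 ≤ g 1)
    (hrec : ∀ n, g (n + 1) - g n / 4 ≤ g (n + 2)) (n : ℕ) :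
    (n + 2) * g n ≤ 2 * (n + 1) * g (n + 1) := by
  induction n with
  | zero => norm_num; linarith
  | succ n ih =>
    push_cast
    nlinarith [hrec n]

theorem div_pow_mul_le_of_sub_quarter_le {g : ℕ → ℝ} (h01 : g 0 ≤ g 1)
    (hrec : ∀ n, g (n + 1) - g n / 4 ≤ g (n + 2)) (n : ℕ) :
    (n + 1) / 2 ^ n * g 0 ≤ g n := by
  induction n with
  | zero => simp
  | succ n ih =>
    have hratio := succ_mul_le_of_sub_quarter_le h01 hrec n
    have hpos : (0 : ℝ) < 2 * (n + 1) := by positivity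
    calc ((n + 1 : ℕ) + 1 : ℝ) / 2 ^ (n + 1) * g 0
        = (n + 2) / (2 * (n + 1)) * ((n + 1) / 2 ^ n * g 0) := by
          push_cast; field_simp; ring
      _ ≤ (n + 2) / (2 * (n + 1)) * g n := by gcongr
      _ ≤ g (n + 1) := by rw [div_mul_eq_mul_div, div_le_iff₀ hpos]; linarith

section Telescoping

variable {E : Type*} [SeminormedAddCommGroup E] {f : ℕ → E} {u : ℕ → ℝ}

theorem norm_sub_le_of_norm_sub_succ_le (h : ∀ n, ‖f (n + 1) - f n‖ ≤ u n - u (n + 1))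
    (n : ℕ) : ‖f n - f 0‖ ≤ u 0 - u n := by
  induction n with
  | zero => simp
  | succ n ih =>
    calc ‖f (n + 1) - f 0‖ ≤ ‖f (n + 1) - f n‖ + ‖f n - f 0‖ :=
          norm_sub_le_norm_sub_add_norm_sub _ _ _
      _ ≤ u 0 - u (n + 1) := by linarith [h n]

theorem cauchySeq_of_norm_sub_succ_le (h : ∀ n, ‖f (n + 1) - f n‖ ≤ u n - u (n + 1))
    (hu : ∀ n, 0 ≤ u n) : CauchySeq f := by
  refine cauchySeq_of_dist_le_of_summable (fun n => u n - u (n + 1))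
    (fun n => by simpa [dist_eq_norm'] using h n) ?_
  refine summable_of_sum_range_le (c := u 0) (fun n => (norm_nonneg _).trans (h n)) fun n => ?_
  rw [sum_range_sub']
  linarith [hu n]

end Telescoping

section ContinuedFraction

variable {a A B : ℕ → ℂ}

theorem continuant_det_eq (hA : ∀ n, A (n + 2) = A (n + 1) + a (n + 1) * A n)
    (hB : ∀ n, B (n + 2) = B (n + 1) + a (n + 1) * B n) (n : ℕ) :
    A (n + 1) * B n - A n * B (n + 1) =
      (A 1 * B 0 - A 0 * B 1) * ∏ k ∈ range n, -a (k + 1) := by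
  induction n with
  | zero => simp
  | succ n ih =>
    rw [prod_range_succ, ← mul_assoc, ← ih, hA, hB]
    ring

theorem norm_continuant_det_le (ha : ∀ n, 1 ≤ n → ‖a n‖ ≤ 1 / 4)
    (hA : ∀ n, A (n + 2) = A (n + 1) + a (n + 1) * A n)
    (hB : ∀ n, B (n + 2) = B (n + 1) + a (n + 1) * B n)
    (hA0 : A 0 = 1) (hA1 : A 1 = 0) (hB0 : B 0 = 0) (hB1 : B 1 = 1) (n : ℕ) :
    ‖A (n + 1) * B n - A n * B (n + 1)‖ ≤ (1 / 4) ^ n := by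
  rw [continuant_det_eq hA hB, hA0, hA1, hB0, hB1, norm_mul, norm_prod]
  calc ‖(0 * 0 - 1 * 1 : ℂ)‖ * ∏ k ∈ range n, ‖-a (k + 1)‖
      = ∏ k ∈ range n, ‖a (k + 1)‖ := by simp
    _ ≤ ∏ _k ∈ range n, (1 / 4 : ℝ) :=
        prod_le_prod (fun _ _ => norm_nonneg _) fun k _ => ha (k + 1) k.succ_pos
    _ = (1 / 4) ^ n := by simp

theorem div_pow_le_norm_continuant (ha : ∀ n, 1 ≤ n → ‖a n‖ ≤ 1 / 4)
    (hB : ∀ n, B (n + 2) = B (n + 1) + a (n + 1) * B n) (hB0 : B 0 = 0) (hB1 : B 1 = 1)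
    (n : ℕ) : (n + 1) / 2 ^ n ≤ ‖B (n + 1)‖ := by
  have h01 : ‖B 1‖ ≤ ‖B 2‖ := by simp [hB 0, hB0, hB1]
  have hrec (n : ℕ) : ‖B (n + 2)‖ - ‖B (n + 1)‖ / 4 ≤ ‖B (n + 3)‖ := by
    have hmul : ‖a (n + 2) * B (n + 1)‖ ≤ ‖B (n + 1)‖ / 4 := by
      rw [norm_mul]
      nlinarith [ha (n + 2) (by omega), norm_nonneg (B (n + 1))]
    calc ‖B (n + 2)‖ - ‖B (n + 1)‖ / 4
        ≤ ‖B (n + 2)‖ - ‖a (n + 2) * B (n + 1)‖ := by linarith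
      _ ≤ ‖B (n + 2) + a (n + 2) * B (n + 1)‖ := norm_sub_le_norm_add _ _
      _ = ‖B (n + 3)‖ := congrArg norm (hB (n + 1)).symm
  simpa [hB1] using div_pow_mul_le_of_sub_quarter_le (g := fun n => ‖B (n + 1)‖) h01 hrec n

theorem norm_approximant_sub_le (ha : ∀ n, 1 ≤ n → ‖a n‖ ≤ 1 / 4)
    (hA : ∀ n, A (n + 2) = A (n + 1) + a (n + 1) * A n)
    (hB : ∀ n, B (n + 2) = B (n + 1) + a (n + 1) * B n)
    (hA0 : A 0 = 1) (hA1 : A 1 = 0) (hB0 : B 0 = 0) (hB1 : B 1 = 1) (n : ℕ) :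
    ‖A (n + 2) / B (n + 2) - A (n + 1) / B (n + 1)‖
      ≤ 1 / (2 * (n + 1)) - 1 / (2 * ((n + 1 : ℕ) + 1)) := by
  have hlow (m : ℕ) : (m + 1) / 2 ^ m ≤ ‖B (m + 1)‖ :=
    div_pow_le_norm_continuant ha hB hB0 hB1 m
  have hB_ne (m : ℕ) : B (m + 1) ≠ 0 :=
    norm_pos_iff.mp ((by positivity : (0 : ℝ) < (m + 1) / 2 ^ m).trans_le (hlow m))
  have hden : (n + 1) * (n + 2) / 2 ^ (2 * n + 1) ≤ ‖B (n + 2)‖ * ‖B (n + 1)‖ := by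
    calc ((n : ℝ) + 1) * (n + 2) / 2 ^ (2 * n + 1)
        = ((n + 1 : ℕ) + 1) / 2 ^ (n + 1) * ((n + 1) / 2 ^ n) := by
          push_cast; rw [div_mul_div_comm, ← pow_add]; ring_nf
      _ ≤ ‖B (n + 2)‖ * ‖B (n + 1)‖ :=
          mul_le_mul (hlow (n + 1)) (hlow n) (by positivity) (norm_nonneg _)
  rw [div_sub_div _ _ (hB_ne (n + 1)) (hB_ne n), norm_div, norm_mul, mul_comm (B (n + 2))]
  calc ‖A (n + 2) * B (n + 1) - A (n + 1) * B (n + 2)‖ / (‖B (n + 2)‖ * ‖B (n + 1)‖)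
      ≤ (1 / 4) ^ (n + 1) / ((n + 1) * (n + 2) / 2 ^ (2 * n + 1)) :=
        div_le_div₀ (by positivity) (norm_continuant_det_le ha hA hB hA0 hA1 hB0 hB1 (n + 1))
          (by positivity) hden
    _ = 1 / (2 * (n + 1)) - 1 / (2 * ((n + 1 : ℕ) + 1)) := by
        rw [show (4 : ℝ) = 2 ^ 2 by norm_num, div_pow, one_pow, ← pow_mul]
        push_cast
        field_simp
        ring

end ContinuedFraction

/-- Indexing: `A (N+1)` is the `N`-th canonical numerator (so `A 0 = A_{-1} = 1`);
the `n`-th approximant is `f n = A (n+1) / B (n+1)`. -/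
theorem worpitzky (a : ℕ → ℂ)
    (ha : ∀ n : ℕ, 1 ≤ n → ‖a n‖ ≤ 1 / 4)
    (A B : ℕ → ℂ)
    (hA0 : A 0 = 1) (hA1 : A 1 = 0) (hB0 : B 0 = 0) (hB1 : B 1 = 1)
    (hArec : ∀ N : ℕ, 1 ≤ N → A (N + 1) = A N + a N * A (N - 1))
    (hBrec : ∀ N : ℕ, 1 ≤ N → B (N + 1) = B N + a N * B (N - 1)) :
    ∃ f : ℂ, Tendsto (fun N : ℕ => A (N + 1) / B (N + 1)) atTop (𝓝 f) ∧
      (∀ n : ℕ, 1 ≤ n → ‖A (n + 1) / B (n + 1)‖ < 1 / 2) ∧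
      ‖f‖ ≤ 1 / 2 := by
  have hA (n : ℕ) : A (n + 2) = A (n + 1) + a (n + 1) * A n := hArec (n + 1) n.succ_pos
  have hB (n : ℕ) : B (n + 2) = B (n + 1) + a (n + 1) * B n := hBrec (n + 1) n.succ_pos
  set u : ℕ → ℝ := fun n => 1 / (2 * (n + 1))
  have hu (n : ℕ) : 0 < u n := by positivity
  have hstep : ∀ n, ‖A (n + 2) / B (n + 2) - A (n + 1) / B (n + 1)‖ ≤ u n - u (n + 1) :=
    norm_approximant_sub_le ha hA hB hA0 hA1 hB0 hB1
  have hbound (n : ℕ) : ‖A (n + 1) / B (n + 1)‖ ≤ 1 / 2 - u n := by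
    simpa [hA1, u] using
      norm_sub_le_of_norm_sub_succ_le (f := fun n => A (n + 1) / B (n + 1)) hstep n
  obtain ⟨f, hf⟩ := cauchySeq_tendsto_of_complete
    (cauchySeq_of_norm_sub_succ_le (f := fun n => A (n + 1) / B (n + 1)) hstep fun n => (hu n).le)
  exact ⟨f, hf, fun n _ => (hbound n).trans_lt (by linarith [hu n]),
    le_of_tendsto' hf.norm fun n => (hbound n).trans (by linarith [hu n])⟩
end

section
/- Let (a_n) and (b_n) be complex numbers with |b_n| ≥ |a_n| + 1 for all n ≥ 1. Then the continued fraction K_{n=1}^∞ a_n/b_n converges to a finite value, and each approximant f_n satisfies |f_n| < 1. (Śleszyński–Pringsheim theorem.) -/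
/-!
Index the denominators as in the statement (`B 0 = 0`, `B 1 = 1`) and put `p n = |a₁ ⋯ aₙ|`,
`T n = p 0 + ⋯ + p (n-1)`. The hypothesis `|bₙ| ≥ |aₙ| + 1` gives
`|Bₙ₊₂| - |Bₙ₊₁| ≥ |aₙ₊₁| (|Bₙ₊₁| - |Bₙ|)`, so the increments dominate `p n` and `|Bₙ| ≥ Tₙ`.
The determinant formula `Aₙ₊₁Bₙ - AₙBₙ₊₁ = ±a₁⋯aₙ` then bounds the distance of consecutive approximants by
`p (n+1) / (T (n+1) T (n+2)) = 1 / T (n+1) - 1 / T (n+2)`, a telescoping bound: the approximants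
form a Cauchy sequence and stay within `1 - 1 / T (n+1) < 1` of the first one, `f₀ = 0`.
-/

open Filter Topology Finset

section Telescoping

variable {X : Type*} [PseudoMetricSpace X] {f : ℕ → X} {c : ℕ → ℝ}

theorem dist_zero_le_sub_of_dist_succ_le (hfc : ∀ n, dist (f n) (f (n + 1)) ≤ c n - c (n + 1))
    (n : ℕ) : dist (f 0) (f n) ≤ c 0 - c n :=
  calc dist (f 0) (f n) ≤ ∑ i ∈ range n, dist (f i) (f (i + 1)) := dist_le_range_sum_dist f n
    _ ≤ ∑ i ∈ range n, (c i - c (i + 1)) := sum_le_sum fun i _ => hfc i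
    _ = c 0 - c n := sum_range_sub' c n

theorem cauchySeq_of_dist_succ_le_sub (hfc : ∀ n, dist (f n) (f (n + 1)) ≤ c n - c (n + 1))
    (hc : BddBelow (Set.range c)) : CauchySeq f := by
  obtain ⟨m, hm⟩ := hc
  refine cauchySeq_of_dist_le_of_summable _ hfc ?_
  refine summable_of_sum_range_le (c := c 0 - m) (fun n => dist_nonneg.trans (hfc n)) fun n => ?_
  rw [sum_range_sub']
  linarith [hm ⟨n, rfl⟩]

end Telescoping

section Continuants

variable {𝕜 : Type*} [NormedField 𝕜] {a b A B : ℕ → 𝕜}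

def WallisRec (a b X : ℕ → 𝕜) : Prop :=
  ∀ n, X (n + 2) = b (n + 1) * X (n + 1) + a (n + 1) * X n

def absProd (a : ℕ → 𝕜) (n : ℕ) : ℝ := ∏ k ∈ range n, ‖a (k + 1)‖

def absProdSum (a : ℕ → 𝕜) (n : ℕ) : ℝ := ∑ k ∈ range n, absProd a k

theorem absProd_nonneg (a : ℕ → 𝕜) (n : ℕ) : 0 ≤ absProd a n :=
  prod_nonneg fun _ _ => norm_nonneg _

theorem absProd_succ (a : ℕ → 𝕜) (n : ℕ) : absProd a (n + 1) = absProd a n * ‖a (n + 1)‖ :=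
  prod_range_succ _ _

theorem absProdSum_succ (a : ℕ → 𝕜) (n : ℕ) :
    absProdSum a (n + 1) = absProdSum a n + absProd a n :=
  sum_range_succ _ _

theorem one_le_absProdSum_succ (a : ℕ → 𝕜) (n : ℕ) : 1 ≤ absProdSum a (n + 1) := by
  have h := single_le_sum (fun k _ => absProd_nonneg a k) (mem_range.2 n.succ_pos)
  simpa [absProd, absProdSum] using h

theorem wallis_det_succ (hA : WallisRec a b A) (hB : WallisRec a b B) (n : ℕ) :
    A (n + 2) * B (n + 1) - A (n + 1) * B (n + 2) =
      -a (n + 1) * (A (n + 1) * B n - A n * B (n + 1)) := by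
  rw [hA, hB]
  ring

theorem norm_wallis_det (hA : WallisRec a b A) (hB : WallisRec a b B) (n : ℕ) :
    ‖A (n + 1) * B n - A n * B (n + 1)‖ = ‖A 1 * B 0 - A 0 * B 1‖ * absProd a n := by
  induction n with
  | zero => simp [absProd]
  | succ n ih => rw [wallis_det_succ hA hB, norm_mul, norm_neg, ih, absProd_succ]; ring

theorem norm_add_absProd_le (hab : ∀ n, ‖a (n + 1)‖ + 1 ≤ ‖b (n + 1)‖) (hB : WallisRec a b B)
    (h01 : ‖B 0‖ + 1 ≤ ‖B 1‖) (n : ℕ) : ‖B n‖ + absProd a n ≤ ‖B (n + 1)‖ := by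
  induction n with
  | zero => simpa [absProd] using h01
  | succ n ih =>
    have htri : ‖b (n + 1)‖ * ‖B (n + 1)‖ - ‖a (n + 1)‖ * ‖B n‖ ≤ ‖B (n + 2)‖ := by
      rw [← norm_mul, ← norm_mul, hB]
      exact norm_sub_le_norm_add _ _
    have hb := mul_le_mul_of_nonneg_right (hab n) (norm_nonneg (B (n + 1)))
    have hinc := mul_le_mul_of_nonneg_left ih (norm_nonneg (a (n + 1)))
    rw [absProd_succ]
    linarith

theorem absProdSum_le_norm (hab : ∀ n, ‖a (n + 1)‖ + 1 ≤ ‖b (n + 1)‖) (hB : WallisRec a b B)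
    (h01 : ‖B 0‖ + 1 ≤ ‖B 1‖) (n : ℕ) : absProdSum a n ≤ ‖B n‖ := by
  induction n with
  | zero => simp [absProdSum]
  | succ n ih => linarith [absProdSum_succ a n, norm_add_absProd_le hab hB h01 n]

theorem dist_approximants_le_s11 (hab : ∀ n, ‖a (n + 1)‖ + 1 ≤ ‖b (n + 1)‖)
    (hA : WallisRec a b A) (hB : WallisRec a b B)
    (hA0 : A 0 = 1) (hA1 : A 1 = 0) (hB0 : B 0 = 0) (hB1 : B 1 = 1) (n : ℕ) :
    dist (A (n + 1) / B (n + 1)) (A (n + 2) / B (n + 2)) ≤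
      (absProdSum a (n + 1))⁻¹ - (absProdSum a (n + 2))⁻¹ := by
  have h01 : ‖B 0‖ + 1 ≤ ‖B 1‖ := by simp [hB0, hB1]
  have hT₁ := one_le_absProdSum_succ a n
  have hT₂ := one_le_absProdSum_succ a (n + 1)
  have hB₁ := absProdSum_le_norm hab hB h01 (n + 1)
  have hB₂ := absProdSum_le_norm hab hB h01 (n + 2)
  have hB₁0 : B (n + 1) ≠ 0 := norm_pos_iff.1 (by linarith)
  have hB₂0 : B (n + 2) ≠ 0 := norm_pos_iff.1 (by linarith)
  calc dist (A (n + 1) / B (n + 1)) (A (n + 2) / B (n + 2))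
      = ‖A (n + 2) * B (n + 1) - A (n + 1) * B (n + 2)‖ / (‖B (n + 1)‖ * ‖B (n + 2)‖) := by
        rw [dist_comm, dist_eq_norm, div_sub_div _ _ hB₂0 hB₁0, norm_div, norm_mul,
          mul_comm (B (n + 2)), mul_comm ‖B (n + 2)‖]
    _ = absProd a (n + 1) / (‖B (n + 1)‖ * ‖B (n + 2)‖) := by
        rw [norm_wallis_det hA hB, hA0, hA1, hB0, hB1]
        simp
    _ ≤ absProd a (n + 1) / (absProdSum a (n + 1) * absProdSum a (n + 2)) := by
        gcongr
        exact absProd_nonneg a _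
    _ = (absProdSum a (n + 1))⁻¹ - (absProdSum a (n + 2))⁻¹ := by
        have hT₁0 : absProdSum a (n + 1) ≠ 0 := by positivity
        have hT₂0 : absProdSum a (n + 2) ≠ 0 := by positivity
        rw [eq_sub_iff_add_eq, div_eq_mul_inv]
        field_simp
        rw [absProdSum_succ a (n + 1)]
        ring

end Continuants

/-- Śleszyński–Pringsheim theorem.
Indexing: `A (N+1)` is the `N`-th canonical numerator (so `A 0 = A_{-1} = 1`). -/
theorem sleszynski_pringsheim (a b : ℕ → ℂ)
    (hab : ∀ n : ℕ, 1 ≤ n → ‖a n‖ + 1 ≤ ‖b n‖)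
    (A B : ℕ → ℂ)
    (hA0 : A 0 = 1) (hA1 : A 1 = 0) (hB0 : B 0 = 0) (hB1 : B 1 = 1)
    (hArec : ∀ N : ℕ, 1 ≤ N → A (N + 1) = b N * A N + a N * A (N - 1))
    (hBrec : ∀ N : ℕ, 1 ≤ N → B (N + 1) = b N * B N + a N * B (N - 1)) :
    (∃ f : ℂ, Tendsto (fun N : ℕ => A (N + 1) / B (N + 1)) atTop (𝓝 f)) ∧
      ∀ n : ℕ, 1 ≤ n → ‖A (n + 1) / B (n + 1)‖ < 1 := by
  have hab' : ∀ n, ‖a (n + 1)‖ + 1 ≤ ‖b (n + 1)‖ := fun n => hab (n + 1) n.succ_pos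
  have hA : WallisRec a b A := fun n => by simpa using hArec (n + 1) n.succ_pos
  have hB : WallisRec a b B := fun n => by simpa using hBrec (n + 1) n.succ_pos
  set f : ℕ → ℂ := fun N => A (N + 1) / B (N + 1)
  set c : ℕ → ℝ := fun N => (absProdSum a (N + 1))⁻¹
  have hfc : ∀ n, dist (f n) (f (n + 1)) ≤ c n - c (n + 1) :=
    dist_approximants_le_s11 hab' hA hB hA0 hA1 hB0 hB1
  have hc : ∀ n, 0 < c n := fun n => inv_pos.2 (by linarith [one_le_absProdSum_succ a n])
  refine ⟨cauchySeq_tendsto_of_complete (cauchySeq_of_dist_succ_le_sub hfc ⟨0, ?_⟩), fun n _ => ?_⟩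
  · rintro _ ⟨n, rfl⟩
    exact (hc n).le
  · have hf0 : f 0 = 0 := by simp [f, hA1, hB1]
    have hc0 : c 0 = 1 := by simp [c, absProdSum, absProd]
    have h := dist_zero_le_sub_of_dist_succ_le hfc n
    rw [hf0, hc0, dist_zero_left] at h
    linarith [hc n]
end

section
/- Under the hypotheses of the main theorem (sequences c_n > 0, 0 < β_n < 1 with |a_{2n}| ≥ (c_n+1)/(1−β_n) and |a_{2n+1}| ≤ min{c_n, c_{n+1}, β_nβ_{n+1}(c_{n+1}+1)/(4(1−β_{n+1})), β_nβ_{n+1}(c_n+1)/(4(1−β_n))}), the even part of K_{n=1}^∞ a_n/1 converges to a finite value; in particular all the denominators 1+a₂ and a_{2n+2}+1+a_{2n+1} of the even part are nonzero. -/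
open Filter Topology

/-! The denominators `D k = B (2k+1)` of the even part satisfy the three-term recurrence
`D (k+2) = (a (2k+4) + 1 + a (2k+3)) D (k+1) - a (2k+2) a (2k+3) D k`, and so do the numerators.
After the equivalence transformation with multipliers `r k = 2 / (β (k+1) ‖a (2k+2)‖)` the
hypotheses give the Śleszyński–Pringsheim condition `1 + ‖p‖ ≤ ‖b‖`: the new partial denominators
have norm at least `2`, the new partial numerators norm at most `1`. As in Pringsheim's proof, the
weighted denominators `u k` then increase with `u (k+1) - u k ≥ (∏ i < k, q i) (u 1 - u 0)`, where
`q i ≤ 1` are the new partial numerators. Since consecutive approximants differ by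
`C (∏ i < k, q i) / (u k u (k+1))`, the differences are dominated by the telescoping
`K (1 / u k - 1 / u (k+1))`, and the approximants form a Cauchy sequence. -/

open Finset

def ThreeTermRecurrence {R : Type*} [Ring R] (b p X : ℕ → R) : Prop :=
  ∀ k, X (k + 2) = b k * X (k + 1) - p k * X k

theorem ThreeTermRecurrence.casoratian_eq {R : Type*} [CommRing R] {b p N D : ℕ → R}
    (hN : ThreeTermRecurrence b p N) (hD : ThreeTermRecurrence b p D) (k : ℕ) :
    N (k + 1) * D k - N k * D (k + 1) = (∏ i ∈ range k, p i) * (N 1 * D 0 - N 0 * D 1) := by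
  induction k with
  | zero => simp
  | succ k ih =>
    rw [prod_range_succ, hN k, hD k]
    linear_combination p k * ih

/-- The norm of the `k`-th denominator after the equivalence transformation with multipliers
`r`. -/
noncomputable def weightedNorm {𝕜 : Type*} [Norm 𝕜] (r : ℕ → ℝ) (X : ℕ → 𝕜) (k : ℕ) : ℝ :=
  (∏ i ∈ range k, r i) * ‖X k‖

theorem ThreeTermRecurrence.le_weightedNorm_add_two {𝕜 : Type*} [NormedDivisionRing 𝕜]
    {b p D : ℕ → 𝕜} {r : ℕ → ℝ} (hD : ThreeTermRecurrence b p D) (hr : ∀ k, 0 ≤ r k) (k : ℕ) :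
    r (k + 1) * ‖b k‖ * weightedNorm r D (k + 1) - r (k + 1) * r k * ‖p k‖ * weightedNorm r D k
      ≤ weightedNorm r D (k + 2) := by
  have hnorm : ‖b k‖ * ‖D (k + 1)‖ - ‖p k‖ * ‖D k‖ ≤ ‖D (k + 2)‖ := by
    rw [hD k, ← norm_mul, ← norm_mul]
    exact norm_sub_norm_le _ _
  have hP : 0 ≤ (∏ i ∈ range k, r i) * r k * r (k + 1) :=
    mul_nonneg (mul_nonneg (prod_nonneg fun i _ => hr i) (hr k)) (hr (k + 1))
  simp only [weightedNorm, prod_range_succ]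
  linear_combination mul_le_mul_of_nonneg_left hnorm hP

/-- The hypothesis says `u (k + 2) - u (k + 1) ≥ q k * (u (k + 1) - u k)`. -/
theorem prod_mul_sub_le_sub_succ {u q : ℕ → ℝ} (hq : ∀ k, 0 ≤ q k)
    (hu : ∀ k, (1 + q k) * u (k + 1) - q k * u k ≤ u (k + 2)) (k : ℕ) :
    (∏ i ∈ range k, q i) * (u 1 - u 0) ≤ u (k + 1) - u k := by
  induction k with
  | zero => simp
  | succ k ih =>
    rw [prod_range_succ]
    nlinarith [mul_le_mul_of_nonneg_left ih (hq k), hu k]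

theorem cauchySeq_of_dist_le_sub_succ {α : Type*} [PseudoMetricSpace α] {f : ℕ → α}
    {v : ℕ → ℝ} (hv : ∀ k, 0 ≤ v k) (hf : ∀ k, dist (f k) (f (k + 1)) ≤ v k - v (k + 1)) :
    CauchySeq f := by
  refine cauchySeq_of_dist_le_of_summable _ hf (summable_of_sum_range_le (c := v 0) ?_ ?_)
  · exact fun k => dist_nonneg.trans (hf k)
  · intro n
    rw [sum_range_sub' v]
    linarith [hv n]

theorem prod_range_mul_prod_range_succ_mul_prod {M : Type*} [CommMonoid M] (r s : ℕ → M)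
    (k : ℕ) :
    (∏ i ∈ range k, r i) * (∏ i ∈ range (k + 1), r i) * ∏ i ∈ range k, s i
      = r 0 * ∏ i ∈ range k, r (i + 1) * r i * s i := by
  rw [prod_range_succ', prod_mul_distrib, prod_mul_distrib]
  ac_rfl

section Convergence

variable {𝕜 : Type*} [NormedField 𝕜] {b p N D : ℕ → 𝕜} {r : ℕ → ℝ}

theorem weightedNorm_zero : weightedNorm r D 0 = ‖D 0‖ := by
  simp [weightedNorm]

theorem weightedNorm_one : weightedNorm r D 1 = r 0 * ‖D 1‖ := by
  simp [weightedNorm]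

theorem ThreeTermRecurrence.prod_mul_le_weightedNorm_sub (hD : ThreeTermRecurrence b p D)
    (hr : ∀ k, 0 ≤ r k) (hbp : ∀ k, 1 + r (k + 1) * r k * ‖p k‖ ≤ r (k + 1) * ‖b k‖) (k : ℕ) :
    (∏ i ∈ range k, r (i + 1) * r i * ‖p i‖) * (weightedNorm r D 1 - weightedNorm r D 0)
      ≤ weightedNorm r D (k + 1) - weightedNorm r D k := by
  refine prod_mul_sub_le_sub_succ (fun k => ?_) (fun k => ?_) k
  · exact mul_nonneg (mul_nonneg (hr _) (hr _)) (norm_nonneg _)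
  · have hu : 0 ≤ weightedNorm r D (k + 1) :=
      mul_nonneg (prod_nonneg fun i _ => hr i) (norm_nonneg _)
    nlinarith [hD.le_weightedNorm_add_two hr k, mul_le_mul_of_nonneg_right (hbp k) hu]

theorem ThreeTermRecurrence.monotone_weightedNorm (hD : ThreeTermRecurrence b p D)
    (hr : ∀ k, 0 ≤ r k) (hbp : ∀ k, 1 + r (k + 1) * r k * ‖p k‖ ≤ r (k + 1) * ‖b k‖)
    (hD1 : ‖D 0‖ ≤ r 0 * ‖D 1‖) : Monotone (weightedNorm r D) := by
  refine monotone_nat_of_le_succ fun k => ?_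
  have hq : 0 ≤ ∏ i ∈ range k, r (i + 1) * r i * ‖p i‖ :=
    prod_nonneg fun i _ => mul_nonneg (mul_nonneg (hr _) (hr _)) (norm_nonneg _)
  have hδ : 0 ≤ weightedNorm r D 1 - weightedNorm r D 0 := by
    rw [weightedNorm_zero, weightedNorm_one]
    linarith
  linarith [hD.prod_mul_le_weightedNorm_sub hr hbp k, mul_nonneg hq hδ]

theorem ThreeTermRecurrence.dist_div_mul_weightedNorm (hN : ThreeTermRecurrence b p N)
    (hD : ThreeTermRecurrence b p D) {k : ℕ} (hk : D k ≠ 0) (hk' : D (k + 1) ≠ 0) :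
    dist (N k / D k) (N (k + 1) / D (k + 1)) * (weightedNorm r D k * weightedNorm r D (k + 1))
      = ‖N 1 * D 0 - N 0 * D 1‖ * r 0 * ∏ i ∈ range k, r (i + 1) * r i * ‖p i‖ := by
  have hnorm : ‖D k‖ * ‖D (k + 1)‖ ≠ 0 := by positivity
  rw [dist_comm, dist_eq_norm, div_sub_div _ _ hk' hk, mul_comm (D (k + 1)) (N k),
    hN.casoratian_eq hD, norm_div, norm_mul, norm_mul, norm_prod]
  simp only [weightedNorm]
  rw [mul_assoc _ (r 0), ← prod_range_mul_prod_range_succ_mul_prod r (fun i => ‖p i‖)]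
  field_simp

theorem ThreeTermRecurrence.exists_tendsto_div [CompleteSpace 𝕜]
    (hN : ThreeTermRecurrence b p N) (hD : ThreeTermRecurrence b p D) (hr : ∀ k, 0 ≤ r k)
    (hbp : ∀ k, 1 + r (k + 1) * r k * ‖p k‖ ≤ r (k + 1) * ‖b k‖)
    (hD0 : D 0 ≠ 0) (hD1 : ‖D 0‖ < r 0 * ‖D 1‖) :
    ∃ L, Tendsto (fun k => N k / D k) atTop (𝓝 L) := by
  have hδ : 0 < weightedNorm r D 1 - weightedNorm r D 0 := by
    rw [weightedNorm_one, weightedNorm_zero]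
    linarith
  have hu : ∀ k, 0 < weightedNorm r D k := fun k =>
    ((weightedNorm_zero (r := r) (D := D)).symm ▸ norm_pos_iff.2 hD0).trans_le
      (hD.monotone_weightedNorm hr hbp hD1.le (Nat.zero_le k))
  set u := weightedNorm r D
  have hDk : ∀ k, D k ≠ 0 := fun k hk => (hu k).ne' (by simp [u, weightedNorm, hk])
  set K := ‖N 1 * D 0 - N 0 * D 1‖ * r 0 / (u 1 - u 0)
  have hK : 0 ≤ K := div_nonneg (mul_nonneg (norm_nonneg _) (hr 0)) hδ.le
  refine cauchySeq_tendsto_of_complete (cauchySeq_of_dist_le_sub_succ (v := fun k => K / u k)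
    (fun k => div_nonneg hK (hu k).le) fun k => ?_)
  have hinc := hD.prod_mul_le_weightedNorm_sub hr hbp k
  rw [div_sub_div _ _ (hu k).ne' (hu (k + 1)).ne', le_div_iff₀ (mul_pos (hu k) (hu (k + 1))),
    hN.dist_div_mul_weightedNorm hD (hDk k) (hDk (k + 1))]
  calc ‖N 1 * D 0 - N 0 * D 1‖ * r 0 * ∏ i ∈ range k, r (i + 1) * r i * ‖p i‖
      = K * ((∏ i ∈ range k, r (i + 1) * r i * ‖p i‖) * (u 1 - u 0)) := by
        simp only [K]
        field_simp
    _ ≤ K * (u (k + 1) - u k) := mul_le_mul_of_nonneg_left hinc hK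
    _ = K * u (k + 1) - u k * K := by ring

end Convergence

theorem threeTermRecurrence_evenPart {R : Type*} [CommRing R] {a X : ℕ → R}
    (hX : ∀ N, 1 ≤ N → X (N + 1) = X N + a N * X (N - 1)) :
    ThreeTermRecurrence (fun k => a (2 * k + 4) + 1 + a (2 * k + 3))
      (fun k => a (2 * k + 2) * a (2 * k + 3)) (fun k => X (2 * k + 1)) := by
  intro k
  have h2 := hX (2 * k + 2) (by omega)
  have h3 := hX (2 * k + 3) (by omega)
  have h4 := hX (2 * k + 4) (by omega)
  simp only [show 2 * k + 2 - 1 = 2 * k + 1 by omega, show 2 * k + 3 - 1 = 2 * k + 2 by omega,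
    show 2 * k + 4 - 1 = 2 * k + 3 by omega, show 2 * k + 2 + 1 = 2 * k + 3 by omega,
    show 2 * k + 3 + 1 = 2 * k + 4 by omega] at h2 h3 h4
  show X (2 * k + 4 + 1) = (a (2 * k + 4) + 1 + a (2 * k + 3)) * X (2 * k + 3)
    - a (2 * k + 2) * a (2 * k + 3) * X (2 * k + 1)
  rw [h4, h3]
  linear_combination -a (2 * k + 3) * h2

theorem mul_norm_le_norm_add_one_add {R : Type*} [SeminormedRing R] [NormOneClass R] {x y : R}
    {c β : ℝ} (hβ : β < 1) (hy : ‖y‖ ≤ c) (hx : (c + 1) / (1 - β) ≤ ‖x‖) :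
    β * ‖x‖ ≤ ‖x + 1 + y‖ := by
  rw [div_le_iff₀ (by linarith)] at hx
  have h : ‖x‖ ≤ ‖x + 1 + y‖ + ‖1 + y‖ := by
    simpa using norm_sub_le (x + 1 + y) (1 + y)
  nlinarith [norm_add_le (1 : R) y, norm_one (α := R)]

theorem four_mul_le_mul_of_le_div {x y c β β' : ℝ} (hβ : 0 ≤ β) (hβ' : 0 ≤ β')
    (hx : x ≤ β * β' * (c + 1) / (4 * (1 - β'))) (hy : (c + 1) / (1 - β') ≤ y) :
    4 * x ≤ β * β' * y := by
  have hsplit : β * β' * (c + 1) / (4 * (1 - β')) = β * β' * ((c + 1) / (1 - β')) / 4 := by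
    field_simp
  nlinarith [mul_le_mul_of_nonneg_left hy (mul_nonneg hβ hβ')]

/-- The Śleszyński–Pringsheim condition for the transformed even part. -/
theorem one_add_div_mul_div_mul_le {β₁ β₂ s t u v : ℝ} (h₁ : 0 < β₁ * s) (h₂ : 0 < β₂ * u)
    (hs : 0 ≤ s) (ht : 4 * t ≤ β₁ * β₂ * u) (hv : β₂ * u ≤ v) :
    1 + 2 / (β₂ * u) * (2 / (β₁ * s)) * (s * t) ≤ 2 / (β₂ * u) * v := by
  have hq : 2 / (β₂ * u) * (2 / (β₁ * s)) * (s * t) ≤ 1 := by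
    rw [div_mul_div_comm, div_mul_eq_mul_div, div_le_one (mul_pos h₂ h₁)]
    nlinarith [mul_le_mul_of_nonneg_left ht hs]
  have hb : 2 ≤ 2 / (β₂ * u) * v := by
    rw [div_mul_eq_mul_div, le_div_iff₀ h₂]
    linarith
  linarith

theorem even_part_converges_general (a : ℕ → ℂ) (c β : ℕ → ℝ)
    (hc : ∀ n : ℕ, 1 ≤ n → 0 < c n)
    (hβ : ∀ n : ℕ, 1 ≤ n → 0 < β n ∧ β n < 1)
    (heven : ∀ n : ℕ, 1 ≤ n → (c n + 1) / (1 - β n) ≤ ‖a (2 * n)‖)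
    (hodd : ∀ n : ℕ, 1 ≤ n →
      ‖a (2 * n + 1)‖ ≤
        min (min (c n) (c (n + 1)))
          (min (β n * β (n + 1) * (c (n + 1) + 1) / (4 * (1 - β (n + 1))))
               (β n * β (n + 1) * (c n + 1) / (4 * (1 - β n)))))
    (A B : ℕ → ℂ)
    (hB0 : B 0 = 0) (hB1 : B 1 = 1)
    (hArec : ∀ N : ℕ, 1 ≤ N → A (N + 1) = A N + a N * A (N - 1))
    (hBrec : ∀ N : ℕ, 1 ≤ N → B (N + 1) = B N + a N * B (N - 1)) :
    (1 + a 2 ≠ 0) ∧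
      (∀ n : ℕ, 1 ≤ n → a (2 * n + 2) + 1 + a (2 * n + 1) ≠ 0) ∧
      ∃ L : ℂ, Tendsto (fun k : ℕ => A (2 * k + 1) / B (2 * k + 1)) atTop (𝓝 L) := by
  have hpos : ∀ n, 1 ≤ n → 0 < β n * ‖a (2 * n)‖ := fun n hn =>
    mul_pos (hβ n hn).1 ((div_pos (by linarith [hc n hn]) (by linarith [(hβ n hn).2])).trans_le
      (heven n hn))
  have hden : ∀ n, 1 ≤ n → β (n + 1) * ‖a (2 * n + 2)‖ ≤ ‖a (2 * n + 2) + 1 + a (2 * n + 1)‖ :=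
    fun n hn => mul_norm_le_norm_add_one_add (hβ (n + 1) (by omega)).2
      ((hodd n hn).trans ((min_le_left _ _).trans (min_le_right _ _))) (heven (n + 1) (by omega))
  have hden1 : β 1 * ‖a 2‖ ≤ ‖1 + a 2‖ := by
    simpa only [add_zero, add_comm (1 : ℂ)] using
      mul_norm_le_norm_add_one_add (y := 0) (hβ 1 le_rfl).2 (by simpa using (hc 1 le_rfl).le)
        (heven 1 le_rfl)
  set r : ℕ → ℝ := fun k => 2 / (β (k + 1) * ‖a (2 * k + 2)‖)
  have hbp : ∀ k, 1 + r (k + 1) * r k * ‖a (2 * k + 2) * a (2 * k + 3)‖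
      ≤ r (k + 1) * ‖a (2 * k + 4) + 1 + a (2 * k + 3)‖ := fun k => by
    rw [norm_mul]
    exact one_add_div_mul_div_mul_le (hpos (k + 1) (by omega)) (hpos (k + 2) (by omega))
      (norm_nonneg _) (four_mul_le_mul_of_le_div (hβ (k + 1) (by omega)).1.le
        (hβ (k + 2) (by omega)).1.le
        ((hodd (k + 1) (by omega)).trans ((min_le_right _ _).trans (min_le_left _ _)))
        (heven (k + 2) (by omega))) (hden (k + 1) (by omega))
  have hB3 : B 3 = 1 + a 2 := by
    rw [hBrec 2 (by norm_num), hBrec 1 le_rfl]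
    simp [hB0, hB1]
  have hD1 : ‖B 1‖ < r 0 * ‖B 3‖ := by
    rw [hB1, hB3, norm_one, div_mul_eq_mul_div, lt_div_iff₀ (hpos 1 le_rfl)]
    linarith [hpos 1 le_rfl]
  obtain ⟨L, hL⟩ := (threeTermRecurrence_evenPart hArec).exists_tendsto_div
    (threeTermRecurrence_evenPart hBrec) (fun k => (div_pos two_pos (hpos (k + 1) (by omega))).le)
    hbp (by simp [hB1]) hD1
  refine ⟨fun h => ?_, fun n hn h => ?_, L, hL⟩
  · linarith [hpos 1 le_rfl, norm_zero (E := ℂ) ▸ h ▸ hden1]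
  · have hn' : 0 < β (n + 1) * ‖a (2 * n + 2)‖ := hpos (n + 1) (by omega)
    linarith [norm_zero (E := ℂ) ▸ h ▸ hden n hn]

/-- Under the hypotheses of the main theorem, the even part of K a_n/1 converges;
in particular all its denominators are nonzero.
Indexing: `A (N+1)` is the `N`-th canonical numerator (so `A 0 = A_{-1} = 1`). -/
theorem even_part_converges (a : ℕ → ℂ) (c β : ℕ → ℝ)
    (ha : ∀ n : ℕ, 1 ≤ n → a n ≠ 0)
    (hc : ∀ n : ℕ, 1 ≤ n → 0 < c n)
    (hβ : ∀ n : ℕ, 1 ≤ n → 0 < β n ∧ β n < 1)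
    (heven : ∀ n : ℕ, 1 ≤ n → (c n + 1) / (1 - β n) ≤ ‖a (2 * n)‖)
    (hodd : ∀ n : ℕ, 1 ≤ n →
      ‖a (2 * n + 1)‖ ≤
        min (min (c n) (c (n + 1)))
          (min (β n * β (n + 1) * (c (n + 1) + 1) / (4 * (1 - β (n + 1))))
               (β n * β (n + 1) * (c n + 1) / (4 * (1 - β n)))))
    (A B : ℕ → ℂ)
    (hA0 : A 0 = 1) (hA1 : A 1 = 0) (hB0 : B 0 = 0) (hB1 : B 1 = 1)
    (hArec : ∀ N : ℕ, 1 ≤ N → A (N + 1) = A N + a N * A (N - 1))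
    (hBrec : ∀ N : ℕ, 1 ≤ N → B (N + 1) = B N + a N * B (N - 1)) :
    (1 + a 2 ≠ 0) ∧
      (∀ n : ℕ, 1 ≤ n → a (2 * n + 2) + 1 + a (2 * n + 1) ≠ 0) ∧
      ∃ L : ℂ, Tendsto (fun k : ℕ => A (2 * k + 1) / B (2 * k + 1)) atTop (𝓝 L) :=
  even_part_converges_general a c β hc hβ heven hodd A B hB0 hB1 hArec hBrec
end
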